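/- arXiv:2512.12329 — 5 statements merged into one kernel-verified Lean document; each statement's English description precedes it below -/
import Mathlib

section
/- Let G be a finite graph, w a normal weighting of G, and let X, Y ⊆ V(G) and Z ⊆ X. Suppose X ∪ Y is a w-balanced separator of G but Z is not, and let B be the heavy component of G - Z. Then the set S := (N[B] ∩ X) ∪ Y is a w-balanced separator of G. -/
open SimpleGraph

variable {V : Type}

/-- `u` and `v` are connected by a walk in `G` avoiding `S`
(i.e., they lie in the same component of `G - S`). -/
def ReachOutside (G : SimpleGraph V) (S : Set V) (u v : V) : Prop :=
  ∃ p : G.Walk u v, ∀ x ∈ p.support, x ∉ S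

/-- Total weight of a vertex set. -/
noncomputable def setWeight [Finite V] (w : V → ℝ) (A : Set V) : ℝ :=
  ∑ v ∈ (Set.toFinite A).toFinset, w v

/-- `S` is a `w`-balanced separator of `G`: every component of `G - S`
has weight at most half the total weight. -/
def IsBalancedSep [Finite V] (G : SimpleGraph V) (w : V → ℝ) (S : Set V) : Prop :=
  ∀ v, v ∉ S → setWeight w {u | ReachOutside G S u v} ≤ setWeight w (Set.univ : Set V) / 2

/-- Closed neighbourhood `N[A]` of a vertex set. -/
def closedNbhd (G : SimpleGraph V) (A : Set V) : Set V :=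
  A ∪ {x | ∃ a ∈ A, G.Adj a x}

/-- `S` separates `A` from `B` in `G`: every walk from `A` to `B` meets `S`. -/
def Separates (G : SimpleGraph V) (S A B : Set V) : Prop :=
  ∀ a ∈ A, ∀ b ∈ B, ∀ p : G.Walk a b, ∃ x ∈ p.support, x ∈ S

/-- `C` is (the vertex set of) an induced cycle of `G`: the induced subgraph is
connected and every vertex of `C` has exactly two neighbours in `C`. -/
def IsInducedCycle (G : SimpleGraph V) (C : Set V) : Prop :=
  (G.induce C).Connected ∧ ∀ x ∈ C, (G.neighborSet x ∩ C).ncard = 2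

/-- `H` is an induced minor of `G`. -/
def IsInducedMinor {W : Type} (H : SimpleGraph W) (G : SimpleGraph V) : Prop :=
  ∃ X : W → Set V,
    (∀ a, (G.induce (X a)).Connected) ∧
    (Pairwise fun a b => Disjoint (X a) (X b)) ∧
    ∀ a b, a ≠ b → ((∃ u ∈ X a, ∃ v ∈ X b, G.Adj u v) ↔ H.Adj a b)

/-- `H` is a minor of `G`. -/
def IsMinor {W : Type} (H : SimpleGraph W) (G : SimpleGraph V) : Prop :=
  ∃ X : W → Set V,
    (∀ a, (G.induce (X a)).Connected) ∧
    (Pairwise fun a b => Disjoint (X a) (X b)) ∧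
    ∀ a b, H.Adj a b → ∃ u ∈ X a, ∃ v ∈ X b, G.Adj u v

/-- The `ℓ`-wheel: a cycle of length `ℓ` plus a universal vertex (`none`). -/
def wheel (ℓ : ℕ) : SimpleGraph (Option (ZMod ℓ)) :=
  SimpleGraph.fromRel fun a b =>
    a = none ∨ b = none ∨ ∃ i : ZMod ℓ, a = some i ∧ b = some (i + 1)

/-- The `ℓ`-fan: a path on `ℓ` vertices plus a universal vertex (`none`). -/
def fan (ℓ : ℕ) : SimpleGraph (Option (Fin ℓ)) :=
  SimpleGraph.fromRel fun a b =>
    a = none ∨ b = none ∨ ∃ i j : Fin ℓ, a = some i ∧ b = some j ∧ (j : ℕ) = (i : ℕ) + 1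

/-!
The heavy component `B` of `G - Z` is closed under adjacency in `G - S`: a neighbour of `B` outside
`B` lies in `Z ⊆ X`, hence in `N[B] ∩ X ⊆ S`. So a component of `G - S` either lies inside `B`,
where `S` and `X ∪ Y` agree and it sits inside a component of `G - (X ∪ Y)`, or it misses `B`
and weighs at most `1 - w(B) < 1/2`.
-/

lemma setWeight_mono [Finite V] {w : V → ℝ} (hw0 : ∀ v, 0 ≤ w v) {A B : Set V} (h : A ⊆ B) :
    setWeight w A ≤ setWeight w B :=
  Finset.sum_le_sum_of_subset_of_nonneg (by simpa using h) fun v _ _ => hw0 v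

lemma setWeight_compl [Finite V] (w : V → ℝ) (A : Set V) :
    setWeight w Aᶜ = setWeight w Set.univ - setWeight w A := by
  classical
  rw [eq_sub_iff_add_eq', setWeight, setWeight, setWeight, ← Finset.sum_union]
  · congr 1
    ext x
    simp [em]
  · simp [Finset.disjoint_left]

lemma SimpleGraph.Walk.support_subset_of_adj_closed {G : SimpleGraph V} {S B : Set V}
    (hB : ∀ u ∈ B, ∀ v, G.Adj u v → v ∉ S → v ∈ B) {a c : V} (p : G.Walk a c) (ha : a ∈ B)
    (hp : ∀ x ∈ p.support, x ∉ S) : ∀ x ∈ p.support, x ∈ B := by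
  induction p with
  | nil => simpa using ha
  | cons hadj q ih =>
    simp only [Walk.support_cons, List.mem_cons, forall_eq_or_imp] at hp ⊢
    exact ⟨ha, ih (hB _ ha _ hadj (hp.2 _ q.start_mem_support)) hp.2⟩

lemma ReachOutside.of_adj_of_notMem {G : SimpleGraph V} {Z S : Set V} {b u v : V}
    (hS : closedNbhd G {x | ReachOutside G Z x b} ∩ Z ⊆ S) (hu : ReachOutside G Z u b)
    (hadj : G.Adj u v) (hvS : v ∉ S) : ReachOutside G Z v b := by
  obtain ⟨p, hp⟩ := hu
  have hvZ : v ∉ Z := fun hvZ => hvS (hS ⟨Or.inr ⟨u, ⟨p, hp⟩, hadj⟩, hvZ⟩)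
  refine ⟨.cons hadj.symm p, ?_⟩
  simpa [hvZ] using hp

theorem modify_balanced_sep_general [Finite V] (G : SimpleGraph V) (w : V → ℝ)
    (hw0 : ∀ v, 0 ≤ w v) (hw1 : setWeight w (Set.univ : Set V) = 1)
    (X Y Z : Set V) (hZX : Z ⊆ X)
    (hXY : IsBalancedSep G w (X ∪ Y))
    (b : V)
    (hheavy : 1 / 2 < setWeight w {u | ReachOutside G Z u b}) :
    IsBalancedSep G w
      ((closedNbhd G {u | ReachOutside G Z u b} ∩ X) ∪ Y) := by
  set B : Set V := {u | ReachOutside G Z u b}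
  set S : Set V := (closedNbhd G B ∩ X) ∪ Y
  have hB : ∀ u ∈ B, ∀ v, G.Adj u v → v ∉ S → v ∈ B :=
    fun _ hu _ => hu.of_adj_of_notMem fun x hx => Or.inl ⟨hx.1, hZX hx.2⟩
  have hBS : ∀ x ∈ B, x ∉ S → x ∉ X ∪ Y := fun x hx hxS hxXY =>
    hxS (hxXY.imp_left fun hX => ⟨Or.inl hx, hX⟩)
  intro v hvS
  by_cases hv : v ∈ B
  · have hsub : {u | ReachOutside G S u v} ⊆ {u | ReachOutside G (X ∪ Y) u v} := by
      rintro u ⟨p, hp⟩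
      refine ⟨p, fun x hx => hBS x ?_ (hp x hx)⟩
      exact p.reverse.support_subset_of_adj_closed hB hv (by simpa using hp) x (by simpa using hx)
    exact (setWeight_mono hw0 hsub).trans (hXY v (hBS v hv hvS))
  · have hcompl : {u | ReachOutside G S u v} ⊆ Bᶜ := fun u ⟨p, hp⟩ hu =>
      hv (p.support_subset_of_adj_closed hB hu hp v p.end_mem_support)
    calc setWeight w {u | ReachOutside G S u v}
        ≤ setWeight w Bᶜ := setWeight_mono hw0 hcompl
      _ = 1 - setWeight w B := by rw [setWeight_compl, hw1]
      _ ≤ setWeight w Set.univ / 2 := by rw [hw1]; linarith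

/-- thinning out balanced separators. -/
theorem modify_balanced_sep [Finite V] (G : SimpleGraph V) (w : V → ℝ)
    (hw0 : ∀ v, 0 ≤ w v) (hw1 : setWeight w (Set.univ : Set V) = 1)
    (X Y Z : Set V) (hZX : Z ⊆ X)
    (hXY : IsBalancedSep G w (X ∪ Y)) (hZ : ¬ IsBalancedSep G w Z)
    (b : V) (hb : b ∉ Z)
    (hheavy : 1 / 2 < setWeight w {u | ReachOutside G Z u b}) :
    IsBalancedSep G w
      ((closedNbhd G {u | ReachOutside G Z u b} ∩ X) ∪ Y) :=
  modify_balanced_sep_general G w hw0 hw1 X Y Z hZX hXY b hheavy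
end

section
/- Let ℓ ≥ 3 be an integer, G a finite graph, and C an induced cycle in G. If some connected component of G - V(C) has at least ℓ neighbours on C, then G contains the ℓ-wheel W_ℓ as an induced minor. -/
open SimpleGraph

variable {V : Type}

/-!
Let `D` be the component and `s₀, …, s_{ℓ-1}` neighbours of `D` on `C`, in cyclic order.
Cutting `C` just before each `sᵢ` splits it into `ℓ` consecutive paths. As `C` is an induced
cycle, two of these paths are joined by an edge exactly when they are cyclically consecutive,
and `D` sees the `i`-th path at `sᵢ`. Hence `D` as the hub and the paths as the rim are the
branch sets of an induced `W_ℓ`.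
-/

open Finset

section
variable {G : SimpleGraph V}

lemma connected_induce_reachOutside {C : Set V} {d : V} (hd : d ∉ C) :
    (G.induce {u | ReachOutside G C u d}).Connected := by
  classical
  refine G.induce_connected_of_patches d ⟨.nil, by simpa using hd⟩ fun {_} ⟨w, hw⟩ ↦
    ⟨{x | x ∈ w.support}, fun x hx ↦ ⟨w.dropUntil x hx, fun y hy ↦
      hw y (w.support_dropUntil_subset_support hx hy)⟩, w.end_mem_support,
      w.start_mem_support, ?_⟩
  exact w.connected_induce_support.preconnected _ _

lemma connected_induce_image_Icc {f : ℕ → V} {a b : ℕ} (hab : a ≤ b)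
    (hf : ∀ n, a ≤ n → n < b → G.Adj (f n) (f (n + 1))) :
    (G.induce (f '' Set.Icc a b)).Connected := by
  induction b, hab using Nat.le_induction with
  | base =>
    rw [Set.Icc_self, Set.image_singleton, induce_singleton_eq_top]
    exact connected_top
  | succ b hab ih =>
    have : Set.Icc a (b + 1) = Set.Icc a b ∪ {b, b + 1} := by
      ext n
      simp only [Set.mem_Icc, Set.mem_union, Set.mem_insert_iff, Set.mem_singleton_iff]
      omega
    rw [this, Set.image_union, Set.image_pair]
    exact induce_union_connected (ih fun n h1 h2 ↦ hf n h1 (by omega)).preconnected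
      (induce_pair_connected_of_adj (hf b hab (by omega))).preconnected
      ⟨f b, ⟨b, ⟨hab, le_rfl⟩, rfl⟩, by simp⟩

lemma connected_induce_image_of_ordConnected {f : ℕ → V} {I : Set ℕ} (hI : I.OrdConnected)
    (hne : I.Nonempty) (hf : ∀ n ∈ I, n + 1 ∈ I → G.Adj (f n) (f (n + 1))) :
    (G.induce (f '' I)).Connected := by
  obtain ⟨a, ha⟩ := hne
  refine G.induce_connected_of_patches (f a) ⟨a, ha, rfl⟩ ?_
  rintro _ ⟨n, hn, rfl⟩
  have hsub : Set.uIcc a n ⊆ I := hI.uIcc_subset ha hn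
  have hconn := connected_induce_image_Icc (G := G) (f := f) (inf_le_sup (a := a) (b := n))
    fun m h1 h2 ↦ hf m (hsub ⟨h1, h2.le⟩) (hsub ⟨by omega, h2⟩)
  refine ⟨_, Set.image_mono hsub, ⟨a, Set.left_mem_uIcc, rfl⟩, ⟨n, Set.right_mem_uIcc, rfl⟩,
    hconn.preconnected _ _⟩

end

structure IsInducedCycleEnum (G : SimpleGraph V) (f : ℕ → V) (L : ℕ) : Prop where
  injOn : Set.InjOn f (Set.Iio L)
  adj_iff : ∀ m < L, ∀ n < L, G.Adj (f m) (f n) ↔ (m + 1) % L = n ∨ (n + 1) % L = m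

namespace IsInducedCycle

variable {G : SimpleGraph V} {C : Set V}

lemma ncard_neighborSet_induce (hC : IsInducedCycle G C) (v : C) :
    ((G.induce C).neighborSet v).ncard = 2 := by
  have : (G.induce C).neighborSet v = Subtype.val ⁻¹' (G.neighborSet v ∩ C) := by ext; simp
  rw [this, Set.ncard_preimage_of_injective_subset_range Subtype.val_injective (by simp)]
  exact hC.2 v v.2

lemma exists_isInducedCycleEnum [Finite V] (hC : IsInducedCycle G C) {s : V} (hs : s ∈ C) :
    ∃ (L : ℕ) (f : ℕ → V), f 0 = s ∧ f '' Set.Iio L = C ∧ IsInducedCycleEnum G f L := by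
  classical
  have hcyc : (G.induce C).IsCycles := fun v _ ↦ hC.ncard_neighborSet_induce v
  obtain ⟨p, hp, hverts⟩ := hcyc.exists_cycle_toSubgraph_verts_eq_connectedComponentSupp
    (c := (G.induce C).connectedComponentMk ⟨s, hs⟩) rfl
    (Set.nonempty_of_ncard_ne_zero (by rw [hC.ncard_neighborSet_induce]; simp))
  have hsupp (w : C) : w ∈ p.support := by
    rw [← Walk.mem_verts_toSubgraph, hverts, ConnectedComponent.mem_supp_iff,
      ConnectedComponent.eq]
    exact hC.1.preconnected w _
  -- both neighbourhoods have exactly two elements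
  have hadj_walk {a b : C} (h : (G.induce C).Adj a b) : p.toSubgraph.Adj a b := by
    have : p.toSubgraph.neighborSet a = (G.induce C).neighborSet a :=
      Set.eq_of_subset_of_ncard_le (p.toSubgraph.neighborSet_subset a)
        (by rw [hC.ncard_neighborSet_induce, hp.ncard_neighborSet_toSubgraph_eq_two (hsupp a)])
        (Set.toFinite _)
    rw [← Subgraph.mem_neighborSet, this]
    exact h
  set L := p.length
  have hL := hp.three_le_length
  have hinj : Set.InjOn p.getVert (Set.Iio L) := fun m hm n hn h ↦
    hp.getVert_injOn' (by simp only [Set.mem_Iio] at hm; simp; omega)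
      (by simp only [Set.mem_Iio] at hn; simp; omega) h
  have getVert_mod {i : ℕ} (hi : i ≤ L) : p.getVert (i % L) = p.getVert i := by
    rcases hi.lt_or_eq with hi | rfl
    · rw [Nat.mod_eq_of_lt hi]
    · simp [L]
  refine ⟨L, fun n ↦ p.getVert n, by simp, ?_, Subtype.val_injective.comp_injOn hinj, ?_⟩
  · ext x
    refine ⟨by rintro ⟨n, -, rfl⟩; exact (p.getVert n).2, fun hx ↦ ?_⟩
    obtain ⟨n, hn, hnL⟩ := Walk.mem_support_iff_exists_getVert.mp (hsupp ⟨x, hx⟩)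
    refine ⟨n % L, Nat.mod_lt _ (by omega), ?_⟩
    simp [getVert_mod hnL, hn]
  · intro m hm n hn
    change (G.induce C).Adj _ _ ↔ _
    constructor
    · intro h
      obtain ⟨i, hi, hiL⟩ := (Walk.toSubgraph_adj_iff p).mp (hadj_walk h)
      rw [← getVert_mod (Nat.succ_le_of_lt hiL), Sym2.eq_iff] at hi
      rcases hi with ⟨h1, h2⟩ | ⟨h1, h2⟩
      · obtain rfl := hinj hiL hm h1
        exact .inl (hinj (Nat.mod_lt _ (by omega)) hn h2)
      · obtain rfl := hinj hiL hn h1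
        exact .inr (hinj (Nat.mod_lt _ (by omega)) hm h2)
    · rintro (rfl | rfl)
      · rw [getVert_mod (Nat.succ_le_of_lt hm)]; exact p.adj_getVert_succ hm
      · rw [getVert_mod (Nat.succ_le_of_lt hn)]; exact (p.adj_getVert_succ hn).symm

end IsInducedCycle

lemma exists_first_eq_of_le {φ : ℕ → ℕ} (h0 : φ 0 = 0) (hstep : ∀ n, φ (n + 1) ≤ φ n + 1)
    {i N : ℕ} (hi : i ≤ φ N) : ∃ n ≤ N, φ n = i ∧ ∀ m < n, φ m < i := by
  have hex : ∃ n, i ≤ φ n := ⟨N, hi⟩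
  refine ⟨Nat.find hex, Nat.find_min' hex hi, ?_, fun m hm ↦ not_le.mp (Nat.find_min hex hm)⟩
  have hle := Nat.find_spec hex
  rcases Nat.eq_zero_or_pos (Nat.find hex) with h | h
  · rw [h, h0] at hle ⊢
    omega
  · have hpred := Nat.find_min hex (Nat.sub_lt h one_pos)
    have := hstep (Nat.find hex - 1)
    rw [Nat.sub_add_cancel h] at this
    omega

/-- `φ` cuts the positions `0, …, L - 1` of a cycle into the consecutive runs `φ⁻¹' {0}`, …,
`φ⁻¹' {k - 1}`, in this order. -/
structure IsArcLabelling (φ : ℕ → ℕ) (L k : ℕ) : Prop where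
  mono : Monotone φ
  zero : φ 0 = 0
  succ_le : ∀ n, φ (n + 1) ≤ φ n + 1
  last : φ (L - 1) = k - 1

lemma exists_isArcLabelling {P : ℕ → Prop} [DecidablePred P] {L ℓ : ℕ} (h0 : P 0) (hℓ : 0 < ℓ)
    (hP : ℓ ≤ #{n ∈ range L | P n}) :
    ∃ φ : ℕ → ℕ, IsArcLabelling φ L ℓ ∧ ∀ i < ℓ, ∃ n < L, φ n = i ∧ P n := by
  set c : ℕ → ℕ := fun n ↦ #{m ∈ Ioc 0 n | P m}
  have hc_succ (n : ℕ) : c (n + 1) = c n + if P (n + 1) then 1 else 0 := by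
    have : Ioc 0 (n + 1) = insert (n + 1) (Ioc 0 n) := by ext; simp; omega
    simp only [c, this, filter_insert]
    split_ifs
    · rw [card_insert_of_notMem (by simp)]
    · rfl
  have hL : 0 < L := Nat.pos_of_ne_zero fun h ↦ by simp [h] at hP; omega
  have hcL : ℓ ≤ c (L - 1) + 1 := by
    refine hP.trans ((card_le_card fun n hn ↦ ?_).trans (card_insert_le 0 _))
    simp only [mem_filter, mem_range, mem_insert, mem_Ioc] at hn ⊢
    rcases Nat.eq_zero_or_pos n with h | h
    · exact .inl h
    · exact .inr ⟨⟨h, by omega⟩, hn.2⟩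
  set φ : ℕ → ℕ := fun n ↦ min (ℓ - 1) (c n)
  have hφ0 : φ 0 = 0 := by simp [φ, c]
  have hφstep (n : ℕ) : φ (n + 1) ≤ φ n + 1 := by
    have := hc_succ n
    simp only [φ]
    split_ifs at this <;> omega
  have hφmono : Monotone φ := fun a b h ↦
    min_le_min_left _ (monotone_nat_of_le_succ (fun n ↦ by simp [hc_succ]) h)
  refine ⟨φ, ⟨hφmono, hφ0, hφstep, by simp only [φ]; omega⟩, fun i hi ↦ ?_⟩
  obtain ⟨n, hnL, rfl, hmin⟩ := exists_first_eq_of_le hφ0 hφstep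
    (show i ≤ φ (L - 1) by simp only [φ]; omega)
  refine ⟨n, by omega, rfl, ?_⟩
  rcases Nat.eq_zero_or_pos n with rfl | hn
  · exact h0
  · by_contra hPn
    have := hmin (n - 1) (by omega)
    have := hc_succ (n - 1)
    rw [Nat.sub_add_cancel hn, if_neg hPn] at this
    simp only [φ] at *
    omega

namespace IsArcLabelling

variable {φ : ℕ → ℕ} {L k : ℕ}

lemma succ_mod_eq (hφ : IsArcLabelling φ L k) {m n : ℕ} (hm : m < L) (hn : n < L)
    (h : (m + 1) % L = n) (hne : φ m ≠ φ n) : (φ m + 1) % k = φ n := by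
  have hlast := hφ.last
  have hn_le := hφ.mono (show n ≤ L - 1 by omega)
  rcases Nat.lt_or_ge (m + 1) L with hm' | hm'
  · rw [Nat.mod_eq_of_lt hm'] at h
    subst h
    have := hφ.mono (Nat.le_add_right m 1)
    have := hφ.succ_le m
    rw [Nat.mod_eq_of_lt (by omega)]
    omega
  · obtain rfl : m = L - 1 := by omega
    rw [Nat.sub_add_cancel (by omega), Nat.mod_self] at h
    subst h
    rw [hφ.zero] at hne ⊢
    rw [hlast, Nat.sub_add_cancel (by omega), Nat.mod_self]

lemma exists_succ_mod_eq (hφ : IsArcLabelling φ L k) {i j : ℕ} (hi : i < k)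
    (h : (i + 1) % k = j) (hij : i ≠ j) :
    ∃ m < L, ∃ n < L, (m + 1) % L = n ∧ φ m = i ∧ φ n = j := by
  have hlast := hφ.last
  have hL : 2 ≤ L := by
    by_contra
    rw [show L - 1 = 0 by omega, hφ.zero] at hlast
    rcases Nat.lt_or_ge (i + 1) k with h' | h'
    · rw [Nat.mod_eq_of_lt h'] at h; omega
    · rw [show i + 1 = k by omega, Nat.mod_self] at h; omega
  rcases Nat.lt_or_ge (i + 1) k with hk | hk
  · rw [Nat.mod_eq_of_lt hk] at h
    subst h
    obtain ⟨n, hn, hφn, hmin⟩ := exists_first_eq_of_le hφ.zero hφ.succ_le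
      (show i + 1 ≤ φ (L - 1) by omega)
    have hn0 : n ≠ 0 := by rintro rfl; rw [hφ.zero] at hφn; omega
    have := hmin (n - 1) (by omega)
    have := hφ.succ_le (n - 1)
    rw [Nat.sub_add_cancel (by omega)] at this
    exact ⟨n - 1, by omega, n, by omega, by rw [Nat.sub_add_cancel (by omega),
      Nat.mod_eq_of_lt (by omega)], by omega, hφn⟩
  · rw [show i + 1 = k by omega, Nat.mod_self] at h
    subst h
    exact ⟨L - 1, by omega, 0, by omega, by rw [Nat.sub_add_cancel (by omega), Nat.mod_self],
      by omega, hφ.zero⟩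

end IsArcLabelling

section Arcs

def arc (f : ℕ → V) (φ : ℕ → ℕ) (L i : ℕ) : Set V := f '' {n | n < L ∧ φ n = i}

variable {G : SimpleGraph V} {f : ℕ → V} {φ : ℕ → ℕ} {L k : ℕ}

lemma arc_connected (hf : IsInducedCycleEnum G f L) (hφ : Monotone φ) {i : ℕ}
    (hne : (arc f φ L i).Nonempty) : (G.induce (arc f φ L i)).Connected := by
  refine connected_induce_image_of_ordConnected
    (Set.ordConnected_Iio.inter (Set.ordConnected_singleton.preimage_mono hφ))
    (Set.Nonempty.of_image hne) fun n hn hn1 ↦ ?_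
  exact (hf.adj_iff n hn.1 (n + 1) hn1.1).mpr (.inl (Nat.mod_eq_of_lt hn1.1))

lemma disjoint_arc (hf : Set.InjOn f (Set.Iio L)) {i j : ℕ} (hij : i ≠ j) :
    Disjoint (arc f φ L i) (arc f φ L j) := by
  rw [Set.disjoint_left]
  rintro _ ⟨m, ⟨hm, rfl⟩, rfl⟩ ⟨n, ⟨hn, hφn⟩, hfn⟩
  obtain rfl := hf hm hn hfn.symm
  exact hij hφn

lemma exists_adj_arc_iff (hf : IsInducedCycleEnum G f L) (hφ : IsArcLabelling φ L k) {i j : ℕ}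
    (hi : i < k) (hj : j < k) (hij : i ≠ j) :
    (∃ u ∈ arc f φ L i, ∃ v ∈ arc f φ L j, G.Adj u v) ↔
      (i + 1) % k = j ∨ (j + 1) % k = i := by
  constructor
  · rintro ⟨_, ⟨m, ⟨hm, rfl⟩, rfl⟩, _, ⟨n, ⟨hn, rfl⟩, rfl⟩, hadj⟩
    rcases (hf.adj_iff m hm n hn).mp hadj with h | h
    · exact .inl (hφ.succ_mod_eq hm hn h hij)
    · exact .inr (hφ.succ_mod_eq hn hm h hij.symm)
  · rintro (h | h)
    · obtain ⟨m, hm, n, hn, hmn, rfl, rfl⟩ := hφ.exists_succ_mod_eq hi h hij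
      exact ⟨f m, ⟨m, ⟨hm, rfl⟩, rfl⟩, f n, ⟨n, ⟨hn, rfl⟩, rfl⟩,
        (hf.adj_iff m hm n hn).mpr (.inl hmn)⟩
    · obtain ⟨n, hn, m, hm, hnm, rfl, rfl⟩ := hφ.exists_succ_mod_eq hj h hij.symm
      exact ⟨f m, ⟨m, ⟨hm, rfl⟩, rfl⟩, f n, ⟨n, ⟨hn, rfl⟩, rfl⟩,
        (hf.adj_iff m hm n hn).mpr (.inr hnm)⟩

end Arcs

lemma ZMod.val_add_one_eq {n : ℕ} [NeZero n] (a : ZMod n) : (a + 1).val = (a.val + 1) % n := by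
  rw [ZMod.val_add, ZMod.val_one_eq_one_mod, Nat.add_mod_mod]

lemma isInducedMinor_wheel {G : SimpleGraph V} {ℓ : ℕ} (H : Set V) (B : ZMod ℓ → Set V)
    (hH : (G.induce H).Connected) (hB : ∀ i, (G.induce (B i)).Connected)
    (hHB : ∀ i, Disjoint H (B i)) (hBB : Pairwise fun i j ↦ Disjoint (B i) (B j))
    (hspoke : ∀ i, ∃ u ∈ H, ∃ v ∈ B i, G.Adj u v)
    (hrim : ∀ i j, i ≠ j → ((∃ u ∈ B i, ∃ v ∈ B j, G.Adj u v) ↔ j = i + 1 ∨ i = j + 1)) :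
    IsInducedMinor (wheel ℓ) G := by
  refine ⟨fun o ↦ o.elim H B, ?_, ?_, ?_⟩
  · rintro (_ | i)
    exacts [hH, hB i]
  · rintro (_ | i) (_ | j) hij
    · exact absurd rfl hij
    · exact hHB j
    · exact (hHB i).symm
    · exact hBB fun h ↦ hij (congrArg some h)
  · rintro (_ | i) (_ | j) hij
    · exact absurd rfl hij
    · simpa [wheel] using hspoke j
    · obtain ⟨u, hu, v, hv, h⟩ := hspoke i
      simpa [wheel] using ⟨v, hv, u, hu, h.symm⟩
    · have hij' : i ≠ j := fun h ↦ hij (congrArg some h)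
      simp [wheel, hij', hrim i j hij']

/-- if a component of `G - V(C)` has at least `ℓ` neighbours on the
induced cycle `C`, then `G` contains the `ℓ`-wheel as an induced minor. -/
theorem wheel_from_large_neighbourhood [Finite V] (G : SimpleGraph V)
    (ℓ : ℕ) (hℓ : 3 ≤ ℓ) (C : Set V) (hC : IsInducedCycle G C)
    (d : V) (hd : d ∉ C)
    (hnb : ℓ ≤ ({x | x ∈ C ∧ ∃ u, ReachOutside G C u d ∧ G.Adj u x}).ncard) :
    IsInducedMinor (wheel ℓ) G := by
  classical
  set S := {x | x ∈ C ∧ ∃ u, ReachOutside G C u d ∧ G.Adj u x}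
  obtain ⟨s, hs⟩ : S.Nonempty := Set.nonempty_of_ncard_ne_zero (by omega)
  obtain ⟨L, f, rfl, hfC, hf⟩ := hC.exists_isInducedCycleEnum hs.1
  have hcount : ℓ ≤ #{n ∈ range L | f n ∈ S} := by
    have hsub : S ⊆ f '' ↑({n ∈ range L | f n ∈ S} : Finset ℕ) := fun x hx ↦ by
      obtain ⟨n, hn, rfl⟩ := hfC ▸ hx.1
      exact ⟨n, by simpa using ⟨hn, hx⟩, rfl⟩
    calc ℓ ≤ S.ncard := hnb
      _ ≤ _ := Set.ncard_le_ncard hsub (Set.toFinite _)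
      _ ≤ _ := (Set.ncard_image_le (Set.toFinite _)).trans (Set.ncard_coe_finset _).le
  obtain ⟨φ, hφ, hhit⟩ := exists_isArcLabelling hs (by omega) hcount
  have : NeZero ℓ := ⟨by omega⟩
  refine isInducedMinor_wheel {u | ReachOutside G C u d} (fun i ↦ arc f φ L i.val)
    (connected_induce_reachOutside hd) (fun i ↦ arc_connected hf hφ.mono ?_) (fun i ↦ ?_)
    (fun i j hij ↦ disjoint_arc hf.injOn ((ZMod.val_injective ℓ).ne hij)) (fun i ↦ ?_)
    (fun i j hij ↦ ?_)
  · obtain ⟨n, hn, hφn, -⟩ := hhit i.val i.val_lt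
    exact ⟨f n, n, ⟨hn, hφn⟩, rfl⟩
  · rw [Set.disjoint_left]
    rintro u ⟨w, hw⟩ ⟨n, ⟨hn, -⟩, rfl⟩
    exact hw _ w.start_mem_support (hfC ▸ ⟨n, hn, rfl⟩)
  · obtain ⟨n, hn, hφn, -, u, hu, hadj⟩ := hhit i.val i.val_lt
    exact ⟨u, hu, f n, ⟨n, ⟨hn, hφn⟩, rfl⟩, hadj⟩
  · rw [exists_adj_arc_iff hf hφ i.val_lt j.val_lt ((ZMod.val_injective ℓ).ne hij),
      ← ZMod.val_add_one_eq, ← ZMod.val_add_one_eq, (ZMod.val_injective ℓ).eq_iff,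
      (ZMod.val_injective ℓ).eq_iff, eq_comm, @eq_comm _ i]
end

section
/- Let G be a cobweb with presentation (C, I), let W be a wedge of (G, C, I), and let u ∈ I be a vertex that does not attach to W. Then the barrier ∂W separates u from W ∩ C in G; that is, every path in G from u to a vertex of V(W) ∩ V(C) meets ∂W. -/
open SimpleGraph

variable {V : Type}

/-- `G` is a cobweb with presentation `(C, I)`. -/
def IsCobweb (G : SimpleGraph V) (C I : Set V) : Prop :=
  IsInducedCycle G C ∧ I = Cᶜ ∧ I.Nonempty ∧
  (∀ u ∈ I, ∀ v ∈ I, ¬ G.Adj u v) ∧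
  (∀ v : V, 2 ≤ (G.neighborSet v).ncard) ∧
  ∀ u ∈ I, ∀ v ∈ I, u ≠ v → ¬ G.neighborSet u ⊆ G.neighborSet v

/-- A subgraph is a cycle: its coercion is connected and 2-regular. -/
def IsCycleSubgraph (G : SimpleGraph V) (W : G.Subgraph) : Prop :=
  W.coe.Connected ∧ ∀ x ∈ W.verts, (W.neighborSet x).ncard = 2

/-- `W` is a wedge of `(G, C, I)` anchored in `v`: a cycle containing exactly one
vertex of `I`, namely `v`, and exactly two neighbours of `v`. -/
def IsWedge (G : SimpleGraph V) (C I : Set V) (W : G.Subgraph) (v : V) : Prop :=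
  IsCycleSubgraph G W ∧ v ∈ I ∧ W.verts ∩ I = {v} ∧
  (W.verts ∩ G.neighborSet v).ncard = 2

/-- `u` attaches to the wedge `W`. -/
def Attaches (G : SimpleGraph V) (u : V) (W : G.Subgraph) : Prop :=
  u ∉ W.verts ∧ G.neighborSet u ⊆ W.verts

/-- The union of components of `G - V(W)` containing vertices of `C`
(for a non-co-trivial wedge this is the unique such component). -/
def outerPart (G : SimpleGraph V) (C : Set V) (W : G.Subgraph) : Set V :=
  {d | d ∉ W.verts ∧ ∃ c ∈ C, c ∉ W.verts ∧ ReachOutside G W.verts d c}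

open Classical in
/-- The barrier `∂W` of a wedge `W` anchored in `v`. -/
noncomputable def barrier (G : SimpleGraph V) (C : Set V) (W : G.Subgraph) (v : V) : Set V :=
  if C ⊆ W.verts then G.neighborSet v
  else {x | x ∉ outerPart G C W ∧ ∃ d ∈ outerPart G C W, G.Adj d x}

/-- `W₁` (a wedge anchored in `u`) improves `W₂` (a wedge anchored in `v`):
`W₁ - u` is a proper subgraph of `W₂ - v`. -/
def Improves (G : SimpleGraph V) (W₁ : G.Subgraph) (u : V) (W₂ : G.Subgraph) (v : V) : Prop :=
  W₁.deleteVerts {u} ≤ W₂.deleteVerts {v} ∧ W₁.deleteVerts {u} ≠ W₂.deleteVerts {v}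

/-- A vertex is good w.r.t. a wedge-selection `σ` if it is minimal in the
improvement order. -/
def GoodVertex (G : SimpleGraph V) (I : Set V) (σ : V → G.Subgraph) (u : V) : Prop :=
  u ∈ I ∧ ∀ x ∈ I, ¬ Improves G (σ x) x (σ u) u


/-!
If `u ∉ V(W)`, a neighbour of `u` on `C - V(W)` puts `u` in the outer part, and a walk from the
outer part to `V(W)` has to cross its boundary, which is the barrier. If `u` is the anchor `v`
and some neighbour of `v` lies outside `W`, then `v` itself is in the barrier. Otherwise the walk
leaves `v` through an end `y` of the path `W - v`, and a parity count puts `y` in the barrier: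
with `T = V(W) \ {v} ⊆ C`, the degrees inside `T` sum to `2|T| - 2` in `W`, and to an even
number less than `2|T|` in `G` (every vertex of `C` has two neighbours on `C`, and since `C` is
connected and not contained in `T`, some vertex of `T` has one outside `T`). So both sums agree,
`y` has a single neighbour in `T`, and its second neighbour on `C` lies outside `W`.
-/

lemma even_sum_ncard_neighborSet_inter (G : SimpleGraph V) (T : Finset V) :
    Even (∑ t ∈ T, (G.neighborSet t ∩ T).ncard) := by
  classical
  have hdeg : ∀ t : (T : Set V), (G.induce T).degree t = (G.neighborSet t ∩ T).ncard := by
    intro t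
    rw [← card_neighborSet_eq_degree, ← Nat.card_eq_fintype_card, Nat.card_coe_set_eq,
      ← Set.ncard_image_of_injective _ Subtype.val_injective, Set.inter_comm,
      ← Subtype.image_preimage_coe]
    rfl
  rw [← Finset.sum_coe_sort T]
  simp_rw [← hdeg]
  exact ⟨_, (sum_degrees_eq_twice_card_edges _).trans (two_mul _)⟩

lemma SimpleGraph.Subgraph.neighborSet_inter_verts_sdiff_singleton {G : SimpleGraph V}
    (W : G.Subgraph) (t v : V) : W.neighborSet t ∩ (W.verts \ {v}) = W.neighborSet t \ {v} := by
  rw [← Set.inter_sdiff_assoc, Set.inter_eq_left.2 (W.neighborSet_subset_verts t)]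

lemma sum_ncard_neighborSet_inter_add_two [Finite V] {G : SimpleGraph V} {W : G.Subgraph}
    (hW : ∀ x ∈ W.verts, (W.neighborSet x).ncard = 2) {v : V} (hv : v ∈ W.verts)
    {T : Finset V} (hT : (T : Set V) = W.verts \ {v}) :
    ∑ t ∈ T, (W.neighborSet t ∩ T).ncard + 2 = 2 * T.card := by
  classical
  have hsplit : ∀ t ∈ T, (W.neighborSet t ∩ T).ncard + (if W.Adj t v then 1 else 0) = 2 := by
    intro t ht
    have htW : t ∈ W.verts := (hT ▸ Finset.mem_coe.2 ht : t ∈ W.verts \ {v}).1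
    rw [hT, W.neighborSet_inter_verts_sdiff_singleton]
    split_ifs with htv
    · rw [Set.ncard_sdiff_singleton_add_one (show v ∈ W.neighborSet t from htv), hW t htW]
    · rw [Set.sdiff_singleton_eq_self (show v ∉ W.neighborSet t from htv), hW t htW, add_zero]
  have hcount : ∑ t ∈ T, (if W.Adj t v then 1 else 0) = 2 := by
    rw [← Finset.card_filter, ← hW v hv, ← Set.ncard_coe_finset]
    congr 1
    ext t
    simp only [Finset.coe_filter, ← Finset.mem_coe, hT, Set.mem_ofPred_eq, Set.mem_sdiff,
      Set.mem_singleton_iff, Subgraph.mem_neighborSet]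
    exact ⟨fun h => h.2.symm, fun h => ⟨⟨W.edge_vert h.symm, h.ne.symm⟩, h.symm⟩⟩
  calc ∑ t ∈ T, (W.neighborSet t ∩ T).ncard + 2
      = ∑ t ∈ T, ((W.neighborSet t ∩ T).ncard + if W.Adj t v then 1 else 0) := by
        rw [Finset.sum_add_distrib, hcount]
    _ = 2 * T.card := by rw [Finset.sum_congr rfl hsplit, Finset.sum_const, smul_eq_mul, mul_comm]

lemma exists_adj_of_connected_induce {G : SimpleGraph V} {C S : Set V}
    (hC : (G.induce C).Connected) {a b : V} (ha : a ∈ C) (haS : a ∈ S) (hb : b ∈ C)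
    (hbS : b ∉ S) : ∃ d ∈ C ∩ S, ∃ s ∈ C \ S, G.Adj d s := by
  obtain ⟨δ, -, hfst, hsnd⟩ :=
    (hC.preconnected ⟨a, ha⟩ ⟨b, hb⟩).some.exists_boundary_dart {x : C | x.1 ∈ S} haS hbS
  exact ⟨δ.fst, ⟨δ.fst.2, hfst⟩, δ.snd, ⟨δ.snd.2, hsnd⟩, δ.adj⟩

lemma IsInducedCycle.sum_ncard_neighborSet_inter_lt [Finite V] {G : SimpleGraph V} {C : Set V}
    (hC : IsInducedCycle G C) {T : Finset V} (hTC : (T : Set V) ⊆ C) {y c : V} (hy : y ∈ T)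
    (hc : c ∈ C) (hcT : c ∉ T) : ∑ t ∈ T, (G.neighborSet t ∩ T).ncard < 2 * T.card := by
  obtain ⟨d, ⟨-, hdT⟩, s, ⟨hsC, hsT⟩, hds⟩ :=
    exists_adj_of_connected_induce (S := T) hC.1 (hTC hy) hy hc hcT
  have hle : ∀ t ∈ T, (G.neighborSet t ∩ T).ncard ≤ 2 := fun t ht =>
    (Set.ncard_le_ncard (Set.inter_subset_inter_right _ hTC)).trans_eq (hC.2 t (hTC ht))
  have hlt : (G.neighborSet d ∩ T).ncard < 2 := by
    rw [← hC.2 d (hTC hdT)]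
    exact Set.ncard_lt_ncard ⟨Set.inter_subset_inter_right _ hTC, fun h => hsT (h ⟨hds, hsC⟩).2⟩
  calc ∑ t ∈ T, (G.neighborSet t ∩ T).ncard < ∑ _t ∈ T, 2 := Finset.sum_lt_sum hle ⟨d, hdT, hlt⟩
    _ = 2 * T.card := by rw [Finset.sum_const, smul_eq_mul, mul_comm]

lemma IsInducedCycle.exists_adj_notMem_of_adj [Finite V] {G : SimpleGraph V} {C : Set V}
    (hC : IsInducedCycle G C) {W : G.Subgraph} (hW : ∀ x ∈ W.verts, (W.neighborSet x).ncard = 2)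
    {v : V} (hv : v ∈ W.verts) (hvC : v ∉ C) (hWC : W.verts \ {v} ⊆ C) (hCW : ¬ C ⊆ W.verts)
    {y : V} (hy : W.Adj y v) : ∃ z ∈ C, z ∉ W.verts ∧ G.Adj y z := by
  obtain ⟨T, hT⟩ : ∃ T : Finset V, (T : Set V) = W.verts \ {v} :=
    ⟨_, (Set.toFinite _).coe_toFinset⟩
  have hyT : y ∈ T := by rw [← Finset.mem_coe, hT]; exact ⟨W.edge_vert hy, hy.ne⟩
  obtain ⟨c, hc, hcW⟩ := Set.not_subset.1 hCW
  have hcT : c ∉ T := fun h => hcW (hT ▸ Finset.mem_coe.2 h : c ∈ W.verts \ {v}).1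
  have hle : ∀ t ∈ T, (W.neighborSet t ∩ T).ncard ≤ (G.neighborSet t ∩ T).ncard := fun t _ =>
    Set.ncard_le_ncard (Set.inter_subset_inter_left _ fun _ h => h.adj_sub)
  have hsum : ∑ t ∈ T, (W.neighborSet t ∩ T).ncard = ∑ t ∈ T, (G.neighborSet t ∩ T).ncard := by
    have hW_sum := sum_ncard_neighborSet_inter_add_two hW hv hT
    have hG_lt := hC.sum_ncard_neighborSet_inter_lt (hT ▸ hWC) hyT hc hcT
    obtain ⟨k, hk⟩ := even_sum_ncard_neighborSet_inter G T
    have := Finset.sum_le_sum hle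
    omega
  have hGy : (G.neighborSet y ∩ T).ncard < (G.neighborSet y ∩ C).ncard := by
    rw [← (Finset.sum_eq_sum_iff_of_le hle).1 hsum y hyT, hC.2 y (hWC (hT ▸ hyT)), hT,
      W.neighborSet_inter_verts_sdiff_singleton,
      Set.ncard_sdiff_singleton_of_mem (show v ∈ W.neighborSet y from hy),
      hW y (W.edge_vert hy)]
    norm_num
  obtain ⟨z, ⟨hyz, hzC⟩, hzT⟩ := Set.exists_mem_notMem_of_ncard_lt_ncard hGy
  refine ⟨z, hzC, fun hzW => hzT ⟨hyz, ?_⟩, hyz⟩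
  rw [hT]
  exact ⟨hzW, fun h => hvC (h ▸ hzC)⟩

section Cobweb

variable {G : SimpleGraph V} {C I : Set V}

lemma IsCobweb.neighborSet_subset (hG : IsCobweb G C I) {u : V} (hu : u ∈ I) :
    G.neighborSet u ⊆ C := by
  obtain ⟨-, rfl, -, hind, -⟩ := hG
  exact fun w hw => by_contra fun hwC => hind u hu w hwC hw

variable {W : G.Subgraph} {v : V}

lemma IsWedge.anchor_mem (hW : IsWedge G C I W v) : v ∈ W.verts :=
  (hW.2.2.1.symm.subset rfl).1

lemma IsWedge.eq_anchor (hW : IsWedge G C I W v) {x : V} (hx : x ∈ W.verts) (hxI : x ∈ I) :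
    x = v :=
  hW.2.2.1.subset ⟨hx, hxI⟩

lemma IsWedge.anchor_notMem (hG : IsCobweb G C I) (hW : IsWedge G C I W v) : v ∉ C :=
  (hG.2.1 ▸ hW.2.1 : v ∈ Cᶜ)

lemma IsWedge.sdiff_subset (hG : IsCobweb G C I) (hW : IsWedge G C I W v) :
    W.verts \ {v} ⊆ C := fun _ hx =>
  by_contra fun hxC => hx.2 (hW.eq_anchor hx.1 (hG.2.1 ▸ hxC))

lemma IsWedge.adj_anchor [Finite V] (hW : IsWedge G C I W v) {y : V} (hvy : G.Adj v y)
    (hy : y ∈ W.verts) : W.Adj v y := by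
  have hN : W.neighborSet v = W.verts ∩ G.neighborSet v :=
    Set.eq_of_subset_of_ncard_le (fun t ht => ⟨W.edge_vert ht.symm, ht.adj_sub⟩)
      (by rw [hW.2.2.2, hW.1.2 v hW.anchor_mem])
  exact (hN ▸ ⟨hy, hvy⟩ : y ∈ W.neighborSet v)

lemma IsWedge.exists_adj_notMem [Finite V] (hG : IsCobweb G C I) (hW : IsWedge G C I W v)
    (hCW : ¬ C ⊆ W.verts) {y : V} (hvy : G.Adj v y) (hy : y ∈ W.verts) :
    ∃ z ∈ C, z ∉ W.verts ∧ G.Adj y z :=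
  hG.1.exists_adj_notMem_of_adj hW.1.2 hW.anchor_mem (hW.anchor_notMem hG) (hW.sdiff_subset hG)
    hCW (hW.adj_anchor hvy hy).symm

end Cobweb

section Barrier

variable {G : SimpleGraph V} {C : Set V} {W : G.Subgraph} {v : V}

lemma mem_outerPart_of_mem {c : V} (hc : c ∈ C) (hcW : c ∉ W.verts) : c ∈ outerPart G C W :=
  ⟨hcW, c, hc, hcW, Walk.nil, by simpa using hcW⟩

lemma mem_outerPart_of_adj {d c : V} (hd : d ∉ W.verts) (hc : c ∈ C) (hcW : c ∉ W.verts)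
    (hdc : G.Adj d c) : d ∈ outerPart G C W :=
  ⟨hd, c, hc, hcW, hdc.toWalk, by simp [hd, hcW]⟩

lemma notMem_outerPart_of_mem {x : V} (hx : x ∈ W.verts) : x ∉ outerPart G C W :=
  fun h => h.1 hx

lemma barrier_of_subset (hCW : C ⊆ W.verts) : barrier G C W v = G.neighborSet v :=
  if_pos hCW

lemma mem_barrier_of_adj (hCW : ¬ C ⊆ W.verts) {x z : V} (hx : x ∈ W.verts) (hz : z ∈ C)
    (hzW : z ∉ W.verts) (hxz : G.Adj x z) : x ∈ barrier G C W v := by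
  rw [barrier, if_neg hCW]
  exact ⟨notMem_outerPart_of_mem hx, z, mem_outerPart_of_mem hz hzW, hxz.symm⟩

lemma exists_mem_support_barrier (hCW : ¬ C ⊆ W.verts) {a b : V} (p : G.Walk a b)
    (ha : a ∈ outerPart G C W) (hb : b ∉ outerPart G C W) :
    ∃ x ∈ p.support, x ∈ barrier G C W v := by
  obtain ⟨δ, hδ, hfst, hsnd⟩ := p.exists_boundary_dart _ ha hb
  rw [barrier, if_neg hCW]
  exact ⟨δ.snd, p.dart_snd_mem_support_of_mem_darts hδ, hsnd, δ.fst, hfst, δ.adj⟩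

end Barrier

/-- the barrier of a wedge separates every non-attached vertex of
`I` from `W ∩ C`. -/
theorem barrier_separates [Finite V] (G : SimpleGraph V) (C I : Set V)
    (hcob : IsCobweb G C I) (W : G.Subgraph) (v : V) (hW : IsWedge G C I W v)
    (u : V) (hu : u ∈ I) (hatt : ¬ Attaches G u W) :
    Separates G (barrier G C W v) {u} (W.verts ∩ C) := by
  intro a (ha : a = u) b ⟨hbW, hbC⟩ p
  subst a
  have hsnd_adj : u = v → G.Adj u p.snd := fun huv =>
    p.adj_snd (Walk.not_nil_of_ne fun hub => hW.anchor_notMem hcob (huv ▸ hub ▸ hbC))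
  have hsnd_mem : p.snd ∈ p.support := p.getVert_mem_support 1
  by_cases hCW : C ⊆ W.verts
  · rw [barrier_of_subset hCW]
    have huv : u = v := by_contra fun huv =>
      hatt ⟨fun huW => huv (hW.eq_anchor huW hu), (hcob.neighborSet_subset hu).trans hCW⟩
    exact ⟨p.snd, hsnd_mem, huv ▸ hsnd_adj huv⟩
  by_cases huW : u ∈ W.verts
  · have huv := hW.eq_anchor huW hu
    by_cases hN : G.neighborSet u ⊆ W.verts
    · have hy := hsnd_adj huv
      obtain ⟨z, hz, hzW, hyz⟩ := hW.exists_adj_notMem hcob hCW (huv ▸ hy) (hN hy)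
      exact ⟨p.snd, hsnd_mem, mem_barrier_of_adj hCW (hN hy) hz hzW hyz⟩
    · obtain ⟨w, hw, hwW⟩ := Set.not_subset.1 hN
      exact ⟨u, p.start_mem_support,
        mem_barrier_of_adj hCW huW (hcob.neighborSet_subset hu hw) hwW hw⟩
  · obtain ⟨w, hw, hwW⟩ := Set.not_subset.1 fun h => hatt ⟨huW, h⟩
    exact exists_mem_support_barrier hCW p
      (mem_outerPart_of_adj huW (hcob.neighborSet_subset hu hw) hwW hw) (notMem_outerPart_of_mem hbW)
end

section
/- Let G be a cobweb with presentation (C, I) and let σ be a wedge-selection for (G, C, I). Let u, v ∈ I be distinct with u attaching to σ(v). Then exactly one of the following holds: σ(u) improves σ(v), or v attaches to σ(u). -/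
open SimpleGraph

variable {V : Type}

/-!
Write `P_u = σ(u) - u` and `P_v = σ(v) - v`. Both are arcs of the induced cycle `C`, with ends
`N(u) ∩ P_u` and `N(v) ∩ P_v`; an end has degree one in its arc and every other vertex keeps both
of its cycle neighbours. Hence `P_u ≤ P_v` together with `N(v) ⊆ P_u` forces `N(v) ⊆ N(u)`,
which a cobweb forbids: this rules out both alternatives holding at once, and (with the roles of
`u` and `v` swapped) it rules out `P_u = P_v`. If `P_u ≰ P_v`, the ends of `P_u` lie on `P_v`, so
`P_u` must leave `P_v`; since every edge cut of a cycle has an even, positive number of edges,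
`P_u` then runs through both ends of `P_v`, and the two arcs together cover `C ⊇ N(v)`.
-/

theorem Set.eq_pair_of_ncard_eq_two {α : Type*} {s : Set α} {a b : α} (hs : s.ncard = 2)
    (ha : a ∈ s) (hb : b ∈ s) (hab : a ≠ b) : s = {a, b} :=
  (Set.eq_of_subset_of_ncard_le (Set.pair_subset ha hb) (by rw [hs, Set.ncard_pair hab])
    (Set.finite_of_ncard_ne_zero (by rw [hs]; decide))).symm

namespace SimpleGraph

variable {G : SimpleGraph V}

section Parity

variable [DecidableRel G.Adj]

theorem card_filter_adj_product (s t : Finset V) :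
    ((s ×ˢ t).filter fun e => G.Adj e.1 e.2).card = ∑ z ∈ s, (t.filter (G.Adj z)).card := by
  simp only [Finset.card_filter, Finset.sum_product]

theorem even_card_filter_adj_product_self (s : Finset V) :
    Even ((s ×ˢ s).filter fun e => G.Adj e.1 e.2).card := by
  rw [← ZMod.natCast_eq_zero_iff_even, Finset.card_eq_sum_ones, Nat.cast_sum, Nat.cast_one]
  refine Finset.sum_involution (fun e _ => e.swap) (fun _ _ => by decide) (fun e he _ => ?_)
    (fun e he => ?_) (fun e _ => e.swap_swap)
  · exact fun h => (Finset.mem_filter.1 he).2.ne (congrArg Prod.fst h).symm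
  · obtain ⟨he, hadj⟩ := Finset.mem_filter.1 he
    exact Finset.mem_filter.2 ⟨Finset.mem_product.2 (Finset.mem_product.1 he).symm, hadj.symm⟩

theorem even_card_filter_adj_product_sdiff [DecidableEq V] {s c : Finset V} (hsc : s ⊆ c)
    (hdeg : ∀ z ∈ s, (c.filter (G.Adj z)).card = 2) :
    Even ((s ×ˢ (c \ s)).filter fun e => G.Adj e.1 e.2).card := by
  have hsplit : ∀ z, (c.filter (G.Adj z)).card =
      (s.filter (G.Adj z)).card + ((c \ s).filter (G.Adj z)).card := fun z => by
    rw [← Finset.card_union_of_disjoint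
      (Finset.disjoint_filter_filter Finset.disjoint_sdiff), ← Finset.filter_union,
      Finset.union_sdiff_of_subset hsc]
  have hcount : 2 * s.card = ((s ×ˢ s).filter fun e => G.Adj e.1 e.2).card +
      ((s ×ˢ (c \ s)).filter fun e => G.Adj e.1 e.2).card := by
    rw [card_filter_adj_product, card_filter_adj_product, ← Finset.sum_add_distrib,
      ← Finset.sum_congr rfl fun z _ => hsplit z, Finset.sum_congr rfl hdeg, Finset.sum_const,
      smul_eq_mul, mul_comm]
  exact (Nat.even_add.mp (hcount ▸ even_two_mul _)).mp (even_card_filter_adj_product_self s)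

end Parity

theorem Connected.subset_of_neighborSet_inter_subset {C X : Set V} (h : (G.induce C).Connected)
    (hX : (X ∩ C).Nonempty) (hclosed : ∀ z ∈ X ∩ C, G.neighborSet z ∩ C ⊆ X) : C ⊆ X := by
  obtain ⟨x, hxX, hxC⟩ := hX
  intro y hy
  obtain ⟨p⟩ := h.preconnected ⟨x, hxC⟩ ⟨y, hy⟩
  suffices ∀ {a b : C}, (G.induce C).Walk a b → (a : V) ∈ X → (b : V) ∈ X from this p hxX
  intro a b p
  induction p with
  | nil => exact id
  | cons hadj _ ih => exact fun ha => ih (hclosed _ ⟨ha, Subtype.prop _⟩ ⟨hadj, Subtype.prop _⟩)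

theorem Subgraph.neighborSet_deleteVerts_singleton (W : G.Subgraph) {w z : V} (hz : z ≠ w) :
    (W.deleteVerts {w}).neighborSet z = W.neighborSet z \ {w} := by
  ext y
  simp only [Subgraph.mem_neighborSet, Subgraph.deleteVerts_adj, Set.mem_sdiff,
    Set.mem_singleton_iff]
  exact ⟨fun h => ⟨h.2.2.2.2, h.2.2.2.1⟩, fun h => ⟨h.1.fst_mem, hz, h.1.snd_mem, h.2, h.1⟩⟩

end SimpleGraph

namespace IsInducedCycle

variable {G : SimpleGraph V} {C : Set V}

theorem one_lt_ncard_edges_leaving [Finite V] (hC : IsInducedCycle G C) {S : Set V}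
    (hSC : S ⊆ C) (hS : S.Nonempty) (hCS : ¬ C ⊆ S) :
    1 < {e : V × V | e.1 ∈ S ∧ e.2 ∈ C \ S ∧ G.Adj e.1 e.2}.ncard := by
  classical
  have := Fintype.ofFinite V
  have hfilter : ∀ z, ↑(C.toFinset.filter (G.Adj z)) = G.neighborSet z ∩ C := fun z => by
    ext; simp [and_comm]
  have hleaving : {e : V × V | e.1 ∈ S ∧ e.2 ∈ C \ S ∧ G.Adj e.1 e.2} =
      ↑((S.toFinset ×ˢ (C.toFinset \ S.toFinset)).filter fun e => G.Adj e.1 e.2) := by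
    ext; simp [and_assoc]
  rw [hleaving, Set.ncard_coe_finset]
  have heven := G.even_card_filter_adj_product_sdiff (Set.toFinset_subset_toFinset.2 hSC)
    fun z hz => by
      rw [← Set.ncard_coe_finset, hfilter]; exact hC.2 z (hSC (Set.mem_toFinset.1 hz))
  have hpos : ((S.toFinset ×ˢ (C.toFinset \ S.toFinset)).filter
      fun e => G.Adj e.1 e.2).Nonempty := by
    by_contra hempty
    refine hCS (hC.1.subset_of_neighborSet_inter_subset ?_ ?_)
    · obtain ⟨x, hx⟩ := hS; exact ⟨x, hx, hSC hx⟩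
    · rintro z ⟨hzS, -⟩ y ⟨hzy, hyC⟩
      by_contra hyS
      exact hempty ⟨(z, y), by simpa [hzS, hyC, hyS] using hzy⟩
  obtain ⟨k, hk⟩ := heven
  have := hpos.card_pos
  omega

end IsInducedCycle

-- An arc of the cycle `C` with ends `E ∩ P.verts`; it models `W - v` for a wedge `W` anchored
-- in `v`, with `E = N(v)`.
structure IsArc (G : SimpleGraph V) (C E : Set V) (P : G.Subgraph) : Prop where
  verts_subset : P.verts ⊆ C
  neighborSet_eq : ∀ z ∈ P.verts, z ∉ E → P.neighborSet z = G.neighborSet z ∩ C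
  ncard_neighborSet_of_mem : ∀ z ∈ P.verts, z ∈ E → (P.neighborSet z).ncard = 1
  ncard_inter_verts : (E ∩ P.verts).ncard = 2

namespace IsArc

variable {G : SimpleGraph V} {C E F : Set V} {P Q : G.Subgraph}

theorem neighborSet_inter_subset (hP : IsArc G C E P) {z : V} (hz : z ∈ P.verts) (hzE : z ∉ E) :
    G.neighborSet z ∩ C ⊆ P.verts := by
  rw [← hP.neighborSet_eq z hz hzE]
  exact fun _ h => h.snd_mem

theorem exists_adj_of_mem (hP : IsArc G C E P) {z : V} (hz : z ∈ P.verts) (hzE : z ∈ E) :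
    ∃ t, P.Adj z t := by
  obtain ⟨t, ht⟩ := Set.ncard_eq_one.1 (hP.ncard_neighborSet_of_mem z hz hzE)
  exact ⟨t, (ht.ge rfl : t ∈ P.neighborSet z)⟩

theorem subset_of_le (hC : IsInducedCycle G C) (hP : IsArc G C E P) (hQ : IsArc G C F Q)
    (hle : P ≤ Q) (hF : F ⊆ P.verts) : F ⊆ E := by
  intro q hqF
  by_contra hqE
  have hqP := hF hqF
  have hP2 : (P.neighborSet q).ncard = 2 := by
    rw [hP.neighborSet_eq q hqP hqE]; exact hC.2 q (hP.verts_subset hqP)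
  have hQ1 := hQ.ncard_neighborSet_of_mem q (hle.1 hqP) hqF
  have := Set.ncard_le_ncard (Subgraph.neighborSet_subset_of_subgraph hle q)
    (Set.finite_of_ncard_ne_zero (by rw [hQ1]; decide))
  omega

theorem subset_of_verts_subset_of_not_le (hC : IsInducedCycle G C) (hP : IsArc G C E P)
    (hQ : IsArc G C F Q) (hPQ : P.verts ⊆ Q.verts) (hle : ¬ P ≤ Q) :
    C ⊆ Q.verts ∧ F ∩ Q.verts ⊆ P.verts := by
  obtain ⟨z, z', hPzz', hQzz'⟩ : ∃ z z', P.Adj z z' ∧ ¬ Q.Adj z z' := by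
    by_contra! h
    exact hle ⟨hPQ, fun _ _ hzz' => h _ _ hzz'⟩
  have hend : ∀ {x x'}, P.Adj x x' → ¬ Q.Adj x x' →
      x ∈ F ∩ Q.verts ∧ G.neighborSet x ∩ C ⊆ Q.verts := by
    intro x x' hPxx' hQxx'
    have hxQ := hPQ hPxx'.fst_mem
    have hx'C := hP.verts_subset hPxx'.snd_mem
    have hxF : x ∈ F := by
      by_contra hxF
      have : x' ∈ Q.neighborSet x := (hQ.neighborSet_eq x hxQ hxF).ge ⟨hPxx'.adj_sub, hx'C⟩
      exact hQxx' this
    obtain ⟨t, hxt⟩ := hQ.exists_adj_of_mem hxQ hxF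
    refine ⟨⟨hxF, hxQ⟩, ?_⟩
    rw [Set.eq_pair_of_ncard_eq_two (hC.2 x (hQ.verts_subset hxQ))
      ⟨hxt.adj_sub, hQ.verts_subset hxt.snd_mem⟩ ⟨hPxx'.adj_sub, hx'C⟩
      (by rintro rfl; exact hQxx' hxt)]
    exact Set.pair_subset hxt.snd_mem (hPQ hPxx'.snd_mem)
  obtain ⟨hzF, hzC⟩ := hend hPzz' hQzz'
  obtain ⟨hz'F, hz'C⟩ := hend hPzz'.symm fun h => hQzz' h.symm
  have hFQ := Set.eq_pair_of_ncard_eq_two hQ.ncard_inter_verts hzF hz'F hPzz'.adj_sub.ne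
  refine ⟨hC.1.subset_of_neighborSet_inter_subset ⟨z, hzF.2, hQ.verts_subset hzF.2⟩
    fun x ⟨hxQ, _⟩ => ?_, hFQ ▸ Set.pair_subset hPzz'.fst_mem hPzz'.snd_mem⟩
  by_cases hxF : x ∈ F
  · have : x ∈ ({z, z'} : Set V) := hFQ ▸ ⟨hxF, hxQ⟩
    obtain rfl | rfl := this
    exacts [hzC, hz'C]
  · exact hQ.neighborSet_inter_subset hxQ hxF

theorem subset_of_not_verts_subset [Finite V] (hC : IsInducedCycle G C) (hP : IsArc G C E P)
    (hQ : IsArc G C F Q) (hEQ : E ∩ P.verts ⊆ Q.verts) (hPQ : ¬ P.verts ⊆ Q.verts) :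
    C ⊆ P.verts ∪ Q.verts ∧ F ∩ Q.verts ⊆ P.verts := by
  set S := P.verts \ Q.verts
  have hexit : ∀ {z y}, z ∈ S → y ∈ C \ S → G.Adj z y → y ∈ F ∩ Q.verts ∧ y ∈ P.verts ∧
      ∃ t ∈ Q.verts, G.neighborSet y ∩ C = {t, z} := by
    rintro z y ⟨hzP, hzQ⟩ ⟨hyC, hyS⟩ hzy
    have hyP := hP.neighborSet_inter_subset hzP (fun h => hzQ (hEQ ⟨h, hzP⟩)) ⟨hzy, hyC⟩
    have hyQ : y ∈ Q.verts := by
      by_contra h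
      exact hyS ⟨hyP, h⟩
    have hyF : y ∈ F := by
      by_contra h
      exact hzQ (hQ.neighborSet_inter_subset hyQ h ⟨hzy.symm, hP.verts_subset hzP⟩)
    obtain ⟨t, hyt⟩ := hQ.exists_adj_of_mem hyQ hyF
    exact ⟨⟨hyF, hyQ⟩, hyP, t, hyt.snd_mem, Set.eq_pair_of_ncard_eq_two (hC.2 y hyC)
      ⟨hyt.adj_sub, hQ.verts_subset hyt.snd_mem⟩ ⟨hzy.symm, hP.verts_subset hzP⟩
      fun h => hzQ (h ▸ hyt.snd_mem)⟩
  obtain ⟨x, hxP, hxQ⟩ := Set.not_subset.1 hPQ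
  obtain ⟨y, -, hyQ⟩ : (F ∩ Q.verts).Nonempty :=
    Set.nonempty_of_ncard_ne_zero (by rw [hQ.ncard_inter_verts]; decide)
  obtain ⟨⟨z₁, y₁⟩, ⟨z₂, y₂⟩, ⟨hz₁, hy₁, h₁⟩, ⟨hz₂, hy₂, h₂⟩, hne⟩ :=
    (Set.one_lt_ncard_iff (Set.toFinite _)).1 (hC.one_lt_ncard_edges_leaving (S := S)
      (fun z hz => hP.verts_subset hz.1) ⟨x, hxP, hxQ⟩ fun h => (h (hQ.verts_subset hyQ)).2 hyQ)
  obtain ⟨hy₁F, hy₁P, t₁, ht₁, hN₁⟩ := hexit hz₁ hy₁ h₁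
  obtain ⟨hy₂F, hy₂P, t₂, ht₂, hN₂⟩ := hexit hz₂ hy₂ h₂
  have hy : y₁ ≠ y₂ := by
    rintro rfl
    have : z₂ ∈ ({t₁, z₁} : Set V) := hN₁ ▸ ⟨h₂.symm, hP.verts_subset hz₂.1⟩
    rcases this with rfl | rfl
    · exact hz₂.2 ht₁
    · exact hne rfl
  have hFQ := Set.eq_pair_of_ncard_eq_two hQ.ncard_inter_verts hy₁F hy₂F hy
  refine ⟨hC.1.subset_of_neighborSet_inter_subset ⟨x, Or.inl hxP, hP.verts_subset hxP⟩
    fun w ⟨hw, _⟩ => ?_, hFQ ▸ Set.pair_subset hy₁P hy₂P⟩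
  by_cases hwQ : w ∈ Q.verts
  · by_cases hwF : w ∈ F
    · have : w ∈ ({y₁, y₂} : Set V) := hFQ ▸ ⟨hwF, hwQ⟩
      obtain rfl | rfl := this
      · rw [hN₁]; exact Set.pair_subset (Or.inr ht₁) (Or.inl hz₁.1)
      · rw [hN₂]; exact Set.pair_subset (Or.inr ht₂) (Or.inl hz₂.1)
    · exact (hQ.neighborSet_inter_subset hwQ hwF).trans Set.subset_union_right
  · have hwP := hw.resolve_right hwQ
    exact (hP.neighborSet_inter_subset hwP fun h => hwQ (hEQ ⟨h, hwP⟩)).trans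
      Set.subset_union_left

theorem subset_of_not_le [Finite V] (hC : IsInducedCycle G C) (hP : IsArc G C E P)
    (hQ : IsArc G C F Q) (hEQ : E ∩ P.verts ⊆ Q.verts) (hle : ¬ P ≤ Q) :
    C ⊆ P.verts ∪ Q.verts ∧ F ∩ Q.verts ⊆ P.verts := by
  by_cases hPQ : P.verts ⊆ Q.verts
  · obtain ⟨hCQ, hFQ⟩ := hP.subset_of_verts_subset_of_not_le hC hQ hPQ hle
    exact ⟨hCQ.trans Set.subset_union_right, hFQ⟩
  · exact hP.subset_of_not_verts_subset hC hQ hEQ hPQ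

end IsArc

theorem IsWedge.isArc {G : SimpleGraph V} {C I : Set V} {W : G.Subgraph} {w : V}
    (hcob : IsCobweb G C I) (hW : IsWedge G C I W w) :
    IsArc G C (G.neighborSet w) (W.deleteVerts {w}) := by
  obtain ⟨⟨-, hdeg⟩, -, hWI, hN2⟩ := hW
  have hwW : w ∈ W.verts := ((Set.ext_iff.1 hWI w).2 rfl).1
  have hverts : W.verts \ {w} ⊆ C := fun z ⟨hz, hzw⟩ => by
    by_contra hzC
    exact hzw ((Set.ext_iff.1 hWI z).1 ⟨hz, hcob.2.1 ▸ hzC⟩)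
  have hWw : W.neighborSet w = W.verts ∩ G.neighborSet w :=
    Set.eq_of_subset_of_ncard_le (fun _ h => ⟨h.snd_mem, h.adj_sub⟩)
      (by rw [hN2, hdeg w hwW]) (Set.finite_of_ncard_ne_zero (by rw [hN2]; decide))
  refine ⟨hverts, fun z ⟨hz, hzw⟩ hzE => ?_, fun z ⟨hz, hzw⟩ hzE => ?_, ?_⟩
  · have hwz : w ∉ W.neighborSet z := fun h => hzE h.adj_sub.symm
    rw [W.neighborSet_deleteVerts_singleton hzw, Set.sdiff_singleton_eq_self hwz]
    have hzC := hverts ⟨hz, hzw⟩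
    exact Set.eq_of_subset_of_ncard_le
      (fun y hy => ⟨hy.adj_sub, hverts ⟨hy.snd_mem, fun hyw => hwz (hyw ▸ hy)⟩⟩)
      (by rw [hcob.1.2 z hzC, hdeg z hz])
      (Set.finite_of_ncard_ne_zero (by rw [hcob.1.2 z hzC]; decide))
  · have hwz : w ∈ W.neighborSet z := ((hWw.ge ⟨hz, hzE⟩ : W.Adj w z)).symm
    rw [W.neighborSet_deleteVerts_singleton hzw, Set.ncard_sdiff_singleton_of_mem hwz, hdeg z hz]
  · rw [Subgraph.deleteVerts_verts, ← Set.inter_sdiff_assoc,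
      Set.sdiff_singleton_eq_self fun h => G.notMem_neighborSet_self h.1, Set.inter_comm, hN2]

/-- if `u` attaches to `σ v`, then exactly one of the following
holds: `σ u` improves `σ v`, or `v` attaches to `σ u`. -/
theorem attach_pair_or_improve [Finite V] (G : SimpleGraph V) (C I : Set V)
    (hcob : IsCobweb G C I) (σ : V → G.Subgraph)
    (hσ : ∀ v ∈ I, IsWedge G C I (σ v) v)
    (u v : V) (hu : u ∈ I) (hv : v ∈ I) (huv : u ≠ v)
    (hatt : Attaches G u (σ v)) :
    Xor' (Improves G (σ u) u (σ v) v) (Attaches G v (σ u)) := by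
  have hPu := (hσ u hu).isArc hcob
  have hPv := (hσ v hv).isArc hcob
  obtain ⟨hC, hIC, -, hind, -, hnsub⟩ := hcob
  have hNvC : G.neighborSet v ⊆ C := fun z hz => by
    by_contra hzC
    exact hind v hv z (hIC ▸ hzC) hz
  have hNu : G.neighborSet u ⊆ ((σ v).deleteVerts {v}).verts := fun z hz =>
    ⟨hatt.2 hz, fun hzv => hind u hu v hv (hzv ▸ hz)⟩
  have hattach : Attaches G v (σ u) ↔ G.neighborSet v ⊆ ((σ u).deleteVerts {u}).verts := by
    have hvu : v ∉ (σ u).verts := fun h =>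
      huv ((Set.ext_iff.1 (hσ u hu).2.2.1 v).1 ⟨h, hv⟩).symm
    exact ⟨fun h z hz => ⟨h.2 hz, fun hzu => hind v hv u hu (hzu ▸ hz)⟩,
      fun h => ⟨hvu, h.trans Set.sdiff_subset⟩⟩
  by_cases hle : (σ u).deleteVerts {u} ≤ (σ v).deleteVerts {v}
  · refine Or.inl ⟨⟨hle, fun heq => ?_⟩, fun h => ?_⟩
    · exact hnsub u hu v hv huv (hPv.subset_of_le hC hPu heq.ge (heq ▸ hNu))
    · exact hnsub v hv u hu huv.symm (hPu.subset_of_le hC hPv hle (hattach.1 h))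
  · obtain ⟨hcover, hends⟩ := hPu.subset_of_not_le hC hPv (fun z hz => hNu hz.1) hle
    refine Or.inr ⟨hattach.2 fun z hz => ?_, fun h => hle h.1⟩
    exact (hcover (hNvC hz)).elim id fun hzQ => hends ⟨hz, hzQ⟩
end

section
/- Let G be a cobweb with presentation (C, I), σ a wedge-selection for (G, C, I), and suppose {u,v} ⊆ I is a good pair such that σ(u) ∩ σ(v) has exactly two connected components. If w ∈ I attaches to both σ(u) and σ(v) and has a neighbour in each of the two components of σ(u) ∩ σ(v), then σ(w) improves at least one of σ(u) and σ(v). -/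
open SimpleGraph

variable {V : Type}

/-!
Enumerate the induced cycle `C` as `f : ZMod n → V`, so that the edges of `G` inside `C` are
exactly the pairs `f i, f (i + 1)`. A wedge minus its anchor is a path whose vertices lie in `C`,
hence an arc of `C`: `σ u - u`, `σ v - v`, `σ w - w` become arcs `P`, `Q`, `R`, and
`σ u ⊓ σ v = P ⊓ Q`.

Since `P ⊓ Q` is disconnected, some edge of `P` is not in `Q`; cutting `C` there turns `Q` into an
interval of positions, while `P` runs around the cut. The two components of `P ⊓ Q` are its parts
after and before the cut, and `w` has a neighbour in each. The arc `R` joins two neighbours of `w`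
and contains no other neighbour of `w`, so it cannot pass over a whole component: either it stays
inside `Q`, or it crosses the cut from the first component to the second and stays inside `P`.

Equality `R = P` is impossible: the neighbours of the anchor of a wedge are the vertices of degree
one in the wedge minus its anchor, so `R = P` would give `N(w) ⊆ N(u)`.
-/

namespace ZMod

variable {n : ℕ}

theorem val_natCast_le (j : ℕ) : (j : ZMod n).val ≤ j := by
  rw [val_natCast]; exact Nat.mod_le _ _

theorem val_one_le_one : (1 : ZMod n).val ≤ 1 := by
  simpa using val_natCast_le (n := n) 1

theorem natCast_ne_zero_of_pos_of_lt {m : ℕ} (h₀ : 0 < m) (h : m < n) : (m : ZMod n) ≠ 0 :=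
  fun hm => by
    have := Nat.le_of_dvd h₀ ((natCast_eq_zero_iff m n).mp hm)
    omega

variable [NeZero n]

theorem val_add_eq_or (a b : ZMod n) :
    (a + b).val = a.val + b.val ∨ (a + b).val + n = a.val + b.val := by
  rcases lt_or_ge (a.val + b.val) n with h | h
  · exact Or.inl (val_add_of_lt h)
  · exact Or.inr (val_add_val_of_le h).symm

theorem val_sub_cases (a b : ZMod n) :
    (b.val ≤ a.val ∧ (a - b).val = a.val - b.val) ∨
      (a.val < b.val ∧ (a - b).val = a.val + n - b.val) := by
  have h := val_add_eq_or (a - b) b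
  rw [sub_add_cancel] at h
  have := val_lt (a - b)
  have := val_lt a
  omega

theorem val_neg_one_sub (a : ZMod n) : (-1 - a).val = n - 1 - a.val := by
  have h₁ := val_lt (-1 : ZMod n)
  have hneg : (-1 : ZMod n).val = n - 1 := by
    rcases eq_or_ne n 1 with rfl | hn
    · omega
    have h := val_add_eq_or (-1 : ZMod n) 1
    rw [neg_add_cancel, val_zero, val_one'' hn] at h
    omega
  have := val_sub_cases (-1) a
  have := val_lt a
  omega

end ZMod

section Progression

variable {R : Type*} [AddCommGroupWithOne R]

theorem eq_add_natCast_of_step (t : ℕ → R) {M : ℕ}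
    (hstep : ∀ j < M, t (j + 1) = t j + 1 ∨ t j = t (j + 1) + 1)
    (hback : ∀ j, j + 2 ≤ M → t (j + 2) ≠ t j) (h₁ : 0 < M → t 1 = t 0 + 1) :
    ∀ j ≤ M, t j = t 0 + j := by
  intro j
  induction j using Nat.strong_induction_on with
  | _ j ih =>
    intro hj
    match j, ih with
    | 0, _ => simp
    | 1, _ => simpa using h₁ (by omega)
    | j + 2, ih =>
      have hprev := ih (j + 1) (by omega) (by omega)
      rcases hstep (j + 1) (by omega) with h | h
      · rw [h, hprev, Nat.cast_succ (j + 1), add_assoc]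
      · refine absurd ?_ (hback j hj)
        rw [ih j (by omega) (by omega), eq_sub_of_add_eq h.symm, hprev, Nat.cast_succ]
        abel

theorem eq_add_or_eq_sub_of_step (t : ℕ → R) {M : ℕ}
    (hstep : ∀ j < M, t (j + 1) = t j + 1 ∨ t j = t (j + 1) + 1)
    (hback : ∀ j, j + 2 ≤ M → t (j + 2) ≠ t j) :
    (∀ j ≤ M, t j = t 0 + j) ∨ ∀ j ≤ M, t j = t 0 - j := by
  by_cases h : 0 < M → t 1 = t 0 + 1
  · exact Or.inl (eq_add_natCast_of_step t hstep hback h)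
  · obtain ⟨hM, hne⟩ := Classical.not_imp.mp h
    have h₁ : t 0 = t 1 + 1 := (hstep 0 hM).resolve_left hne
    right
    intro j hj
    have := eq_add_natCast_of_step (fun j => -t j)
      (fun j hj => by rcases hstep j hj with h | h <;> [right; left] <;> rw [h] <;> abel)
      (fun j hj h => hback j hj (neg_injective h)) (fun _ => by rw [h₁]; abel) j hj
    rw [← neg_neg (t j), this]; abel

end Progression

namespace SimpleGraph

section Components

variable {X : Type*} {H : SimpleGraph X}

theorem ConnectedComponent.supp_subset_of_adj_closed {S : Set X}
    (hS : ∀ a b, H.Adj a b → a ∈ S → b ∈ S) {a : X} (ha : a ∈ S) :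
    (H.connectedComponentMk a).supp ⊆ S := fun d hd => by
  have hr : Relation.ReflTransGen H.Adj a d :=
    (reachable_iff_reflTransGen a d).mp (ConnectedComponent.exact hd).symm
  clear hd
  induction hr with
  | refl => exact ha
  | tail _ hbc ih => exact hS _ _ hbc ih

theorem Preconnected.card_connectedComponent_ne_two (h : H.Preconnected) :
    Nat.card H.ConnectedComponent ≠ 2 := fun hcard => by
  obtain ⟨D₁, D₂, hne, -⟩ := Nat.card_eq_two_iff.mp hcard
  exact hne (h.subsingleton_connectedComponent.elim D₁ D₂)

theorem exists_mem_of_card_connectedComponent_eq_two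
    (hcard : Nat.card H.ConnectedComponent = 2) {S : Set X}
    (hS : ∀ a b, H.Adj a b → a ∈ S → b ∈ S) (hSc : ∀ a ∉ S, ∀ b ∉ S, H.Reachable a b)
    {P : X → Prop} (hP : ∀ D : H.ConnectedComponent, ∃ d ∈ D.supp, P d) :
    ∃ d ∈ S, P d := by
  obtain ⟨a, ha⟩ : S.Nonempty := by
    by_contra hempty
    exact Preconnected.card_connectedComponent_ne_two
      (fun a b => hSc a (fun h => hempty ⟨a, h⟩) b (fun h => hempty ⟨b, h⟩)) hcard
  obtain ⟨d, hd, hPd⟩ := hP (H.connectedComponentMk a)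
  exact ⟨d, ConnectedComponent.supp_subset_of_adj_closed hS ha hd, hPd⟩

end Components

variable {G : SimpleGraph V}

theorem Subgraph.reachable_of_adj_succ {W : G.Subgraph} (g : ℕ → V) {a b : ℕ} (hab : a ≤ b)
    (hadj : ∀ t, a ≤ t → t < b → W.Adj (g t) (g (t + 1))) (ha : g a ∈ W.verts)
    (hb : g b ∈ W.verts) : W.coe.Reachable ⟨g a, ha⟩ ⟨g b, hb⟩ := by
  induction b, hab using Nat.le_induction with
  | base => rfl
  | succ b hab ih =>
    have h := hadj b hab (Nat.lt_succ_self b)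
    exact (ih (fun t h1 h2 => hadj t h1 (by omega)) h.fst_mem).trans h.coe.reachable

theorem Subgraph.ncard_neighborSet_coe (W : G.Subgraph) (y : W.verts) :
    (W.coe.neighborSet y).ncard = (W.neighborSet y).ncard := by
  rw [← Set.ncard_image_of_injective _ Subtype.val_injective]
  congr 1
  ext z
  constructor
  · rintro ⟨z', hz', rfl⟩
    exact hz'
  · intro hz
    exact ⟨⟨z, W.edge_vert hz.symm⟩, hz, rfl⟩

theorem Subgraph.inf_eq_deleteVerts_inf_deleteVerts {W W' : G.Subgraph} {x x' : V}
    (hx : x ∉ W'.verts) (hx' : x' ∉ W.verts) :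
    W ⊓ W' = W.deleteVerts {x} ⊓ W'.deleteVerts {x'} := by
  ext a b
  · simp only [Subgraph.verts_inf, Subgraph.deleteVerts_verts, Set.mem_inter_iff, Set.mem_sdiff,
      Set.mem_singleton_iff]
    exact ⟨fun ⟨ha, ha'⟩ => ⟨⟨ha, fun h => hx (h ▸ ha')⟩, ha', fun h => hx' (h ▸ ha)⟩,
      fun ⟨⟨ha, _⟩, ha', _⟩ => ⟨ha, ha'⟩⟩
  · simp only [Subgraph.inf_adj, Subgraph.deleteVerts_adj, Set.mem_singleton_iff]
    constructor
    · rintro ⟨h, h'⟩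
      exact ⟨⟨h.fst_mem, fun e => hx (e ▸ h'.fst_mem), h.snd_mem, fun e => hx (e ▸ h'.snd_mem), h⟩,
        h'.fst_mem, fun e => hx' (e ▸ h.fst_mem), h'.snd_mem, fun e => hx' (e ▸ h.snd_mem), h'⟩
    · rintro ⟨⟨-, -, -, -, h⟩, -, -, -, -, h'⟩
      exact ⟨h, h'⟩

end SimpleGraph

open SimpleGraph in
theorem IsCycleSubgraph.exists_isCycle_toSubgraph_eq [Finite V] {G : SimpleGraph V}
    {W : G.Subgraph} (hW : IsCycleSubgraph G W) {x : V} (hx : x ∈ W.verts) :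
    ∃ c : G.Walk x x, c.IsCycle ∧ c.toSubgraph = W := by
  classical
  obtain ⟨hconn, hreg⟩ := hW
  have hcyc : W.coe.IsCycles := fun y _ => (W.ncard_neighborSet_coe y).trans (hreg y y.2)
  obtain ⟨p, hp, hverts⟩ :=
    hcyc.exists_cycle_toSubgraph_verts_eq_connectedComponentSupp
      (c := W.coe.connectedComponentMk ⟨x, hx⟩) rfl
      (Set.nonempty_of_ncard_ne_zero (by rw [W.ncard_neighborSet_coe, hreg x hx]; omega))
  have hall : ∀ a, a ∈ p.toSubgraph.verts := fun a => by
    rw [hverts]; exact ConnectedComponent.sound (hconn.preconnected _ _)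
  have : Fintype W.verts := Fintype.ofFinite _
  have hp_top : p.toSubgraph = ⊤ := by
    ext a b
    · exact iff_of_true (hall a) trivial
    · exact hp.adj_toSubgraph_iff_of_isCycles hcyc (hall a) b
  refine ⟨p.map W.hom, (Walk.isCycle_map_iff_of_injective Subtype.val_injective).mpr hp, ?_⟩
  exact (Walk.toSubgraph_map W.hom p).trans (by rw [hp_top, Subgraph.map_hom_top])

namespace SimpleGraph

variable {G : SimpleGraph V} {n : ℕ}

def EnumeratesInducedCycle (G : SimpleGraph V) (f : ZMod n → V) : Prop :=
  f.Injective ∧ ∀ i j, G.Adj (f i) (f j) ↔ j = i + 1 ∨ i = j + 1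

theorem EnumeratesInducedCycle.adj_succ {f : ZMod n → V} (hf : G.EnumeratesInducedCycle f)
    (i : ZMod n) : G.Adj (f i) (f (i + 1)) :=
  (hf.2 i (i + 1)).mpr (Or.inl rfl)

theorem Walk.getVert_eq_getVert_natCast_val {x : V} (c : G.Walk x x) {k : ℕ}
    (hk : k ≤ c.length) : c.getVert k = c.getVert (k : ZMod c.length).val := by
  rcases hk.lt_or_eq with hk | rfl
  · rw [ZMod.val_cast_of_lt hk]
  · rw [ZMod.natCast_self, ZMod.val_zero, c.getVert_length, c.getVert_zero]

theorem Walk.IsCycle.enumeratesInducedCycle {x : V} {c : G.Walk x x} (hc : c.IsCycle)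
    (hind : ∀ a b, G.Adj a b → a ∈ c.support → b ∈ c.support → c.toSubgraph.Adj a b) :
    G.EnumeratesInducedCycle fun i : ZMod c.length => c.getVert i.val := by
  have : NeZero c.length := ⟨by have := hc.three_le_length; omega⟩
  have hsucc : ∀ i : ZMod c.length, c.getVert (i + 1).val = c.getVert (i.val + 1) := fun i => by
    rw [c.getVert_eq_getVert_natCast_val (ZMod.val_lt i), Nat.cast_succ, ZMod.natCast_zmod_val]
  have hinj : Function.Injective fun i : ZMod c.length => c.getVert i.val := fun i j h =>
    ZMod.val_injective _ (hc.getVert_injOn' (by have := ZMod.val_lt i; simp; omega)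
      (by have := ZMod.val_lt j; simp; omega) h)
  refine ⟨hinj, fun i j => ⟨fun h => ?_, ?_⟩⟩
  · obtain ⟨k, he, hk⟩ := (Walk.toSubgraph_adj_iff c).mp
      (hind _ _ h (c.getVert_mem_support _) (c.getVert_mem_support _))
    rw [c.getVert_eq_getVert_natCast_val hk.le, c.getVert_eq_getVert_natCast_val hk,
      Nat.cast_succ] at he
    rcases Sym2.eq_iff.mp he with ⟨h₁, h₂⟩ | ⟨h₁, h₂⟩
    · exact Or.inl (by rw [← hinj h₁, ← hinj h₂])
    · exact Or.inr (by rw [← hinj h₁, ← hinj h₂])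
  · rintro (rfl | rfl)
    · show G.Adj (c.getVert i.val) (c.getVert (i + 1).val)
      rw [hsucc]; exact c.adj_getVert_succ (ZMod.val_lt i)
    · show G.Adj (c.getVert (j + 1).val) (c.getVert j.val)
      rw [hsucc]; exact (c.adj_getVert_succ (ZMod.val_lt j)).symm

theorem Walk.range_getVert_val {x : V} (c : G.Walk x x) [NeZero c.length] :
    Set.range (fun i : ZMod c.length => c.getVert i.val) = {y | y ∈ c.support} := by
  ext y
  constructor
  · rintro ⟨i, rfl⟩
    exact c.getVert_mem_support _
  · intro hy
    obtain ⟨k, rfl, hk⟩ := Walk.mem_support_iff_exists_getVert.mp hy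
    exact ⟨k, (c.getVert_eq_getVert_natCast_val hk).symm⟩

def Subgraph.IsTracedBy (S : G.Subgraph) (g : ℕ → V) (M : ℕ) : Prop :=
  (∀ y, y ∈ S.verts ↔ ∃ j ≤ M, g j = y) ∧
    ∀ a b, S.Adj a b ↔ ∃ j < M, s(g j, g (j + 1)) = s(a, b)

theorem Subgraph.IsTracedBy.reverse {S : G.Subgraph} {g : ℕ → V} {M : ℕ}
    (h : S.IsTracedBy g M) : S.IsTracedBy (fun j => g (M - j)) M := by
  refine ⟨fun y => (h.1 y).trans ⟨?_, ?_⟩, fun a b => (h.2 a b).trans ⟨?_, ?_⟩⟩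
  · rintro ⟨j, hj, rfl⟩
    exact ⟨M - j, by omega, by simp only [Nat.sub_sub_self hj]⟩
  · rintro ⟨j, hj, rfl⟩
    exact ⟨M - j, by omega, rfl⟩
  · rintro ⟨j, hj, he⟩
    refine ⟨M - (j + 1), by omega, ?_⟩
    dsimp only
    rw [← he, show M - (M - (j + 1)) = j + 1 by omega, show M - (M - (j + 1) + 1) = j by omega]
    exact Sym2.eq_swap
  · rintro ⟨j, hj, he⟩
    refine ⟨M - (j + 1), by omega, ?_⟩
    dsimp only at he
    rw [← he, show M - (j + 1) + 1 = M - j by omega]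
    exact Sym2.eq_swap

theorem Walk.IsCycle.deleteVerts_isTracedBy {x : V} {c : G.Walk x x} (hc : c.IsCycle)
    {W : G.Subgraph} (hcW : c.toSubgraph = W) :
    (W.deleteVerts {x}).IsTracedBy (fun j => c.getVert (j + 1)) (c.length - 2) := by
  have hL := hc.three_le_length
  have hne : ∀ k, 1 ≤ k → k < c.length → c.getVert k ≠ x := fun k h1 h2 h => by
    have := (hc.getVert_endpoint_iff h2.le).mp h; omega
  subst hcW
  refine ⟨fun y => ⟨fun ⟨hy, hyx⟩ => ?_, ?_⟩, fun a b => ⟨fun hab => ?_, ?_⟩⟩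
  · obtain ⟨k, rfl, hk⟩ := Walk.mem_support_iff_exists_getVert.mp (c.mem_verts_toSubgraph.mp hy)
    have : k ≠ 0 ∧ k ≠ c.length := by
      constructor <;> rintro rfl <;> simp at hyx
    exact ⟨k - 1, by omega, by dsimp only; rw [Nat.sub_add_cancel (by omega)]⟩
  · rintro ⟨j, hj, rfl⟩
    exact ⟨c.mem_verts_toSubgraph.mpr (c.getVert_mem_support _), hne _ (by omega) (by omega)⟩
  · obtain ⟨ha, hax, hb, hbx, hab⟩ := Subgraph.deleteVerts_adj.mp hab
    obtain ⟨k, he, hk⟩ := (Walk.toSubgraph_adj_iff c).mp hab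
    have hk0 : k ≠ 0 := by
      rintro rfl
      rcases Sym2.eq_iff.mp he with ⟨h, -⟩ | ⟨h, -⟩ <;> simp [← h] at hax hbx
    have hkL : k + 1 ≠ c.length := by
      intro hkL
      rw [hkL, c.getVert_length] at he
      rcases Sym2.eq_iff.mp he with ⟨-, h⟩ | ⟨-, h⟩ <;> simp [← h] at hax hbx
    refine ⟨k - 1, by omega, ?_⟩
    dsimp only
    rwa [Nat.sub_add_cancel (by omega : 1 ≤ k)]
  · rintro ⟨j, hj, he⟩
    have hadj : c.toSubgraph.Adj (c.getVert (j + 1)) (c.getVert (j + 1 + 1)) :=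
      (Walk.toSubgraph_adj_iff c).mpr ⟨j + 1, rfl, by omega⟩
    rcases Sym2.eq_iff.mp he with ⟨rfl, rfl⟩ | ⟨rfl, rfl⟩
    · exact Subgraph.deleteVerts_adj.mpr ⟨hadj.fst_mem, hne _ (by omega) (by omega),
        hadj.snd_mem, hne _ (by omega) (by omega), hadj⟩
    · exact Subgraph.deleteVerts_adj.mpr ⟨hadj.snd_mem, hne _ (by omega) (by omega),
        hadj.fst_mem, hne _ (by omega) (by omega), hadj.symm⟩

end SimpleGraph

open SimpleGraph in
theorem IsInducedCycle.exists_enumeratesInducedCycle [Finite V] {G : SimpleGraph V} {C : Set V}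
    (hC : IsInducedCycle G C) :
    ∃ n, 3 ≤ n ∧ ∃ f : ZMod n → V, G.EnumeratesInducedCycle f ∧ Set.range f = C := by
  obtain ⟨hconn, hdeg⟩ := hC
  set K := (⊤ : G.Subgraph).induce C
  have hK : IsCycleSubgraph G K := by
    refine ⟨?_, fun x hx => ?_⟩
    · have : K.coe = G.induce C := by
        ext a b
        exact ⟨fun h => h.2.2, fun h => ⟨a.2, b.2, h⟩⟩
      exact this ▸ hconn
    · convert hdeg x hx using 2
      ext y
      simp [K, show x ∈ C from hx, and_comm]
  obtain ⟨⟨x, hx⟩⟩ := hconn.nonempty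
  obtain ⟨c, hc, hcK⟩ := hK.exists_isCycle_toSubgraph_eq hx
  have hsupp : ∀ y, y ∈ c.support ↔ y ∈ C := fun y => by
    rw [← Walk.mem_verts_toSubgraph, hcK]; rfl
  have : NeZero c.length := ⟨by have := hc.three_le_length; omega⟩
  refine ⟨c.length, hc.three_le_length, _, hc.enumeratesInducedCycle fun a b hab ha hb => ?_, ?_⟩
  · rw [hcK]
    exact ⟨(hsupp a).mp ha, (hsupp b).mp hb, hab⟩
  · rw [Walk.range_getVert_val]
    ext y
    exact hsupp y

namespace SimpleGraph

variable {G : SimpleGraph V} {n : ℕ}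

/-- The arc of the cyclic sequence `f` running from `f s` through `m` consecutive edges to
`f (s + m)`; `(i - s).val` is the forward distance from `s` to `i`. -/
def cycleArc (G : SimpleGraph V) (f : ZMod n → V) (s : ZMod n) (m : ℕ) : G.Subgraph where
  verts := {y | ∃ i, (i - s).val ≤ m ∧ f i = y}
  Adj a b := G.Adj a b ∧ ∃ i, (i - s).val < m ∧ s(f i, f (i + 1)) = s(a, b)
  adj_sub h := h.1
  edge_vert := by
    rintro a b ⟨-, i, hi, he⟩
    rcases Sym2.eq_iff.mp he with ⟨rfl, -⟩ | ⟨-, rfl⟩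
    · exact ⟨i, hi.le, rfl⟩
    · refine ⟨i + 1, ?_, rfl⟩
      have := ZMod.val_add_le (i - s) 1
      rw [sub_add_eq_add_sub] at this
      have := ZMod.val_one_le_one (n := n)
      omega
  symm := ⟨fun _ _ ⟨h, i, hi, he⟩ => ⟨h.symm, i, hi, he.trans Sym2.eq_swap⟩⟩

variable {f : ZMod n → V} {s : ZMod n} {m : ℕ}

theorem mem_cycleArc_verts_iff {y : V} :
    y ∈ (G.cycleArc f s m).verts ↔ ∃ i, (i - s).val ≤ m ∧ f i = y := Iff.rfl

theorem cycleArc_adj_iff {a b : V} :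
    (G.cycleArc f s m).Adj a b ↔ G.Adj a b ∧ ∃ i, (i - s).val < m ∧ s(f i, f (i + 1)) = s(a, b) :=
  Iff.rfl

theorem mem_cycleArc_verts (hf : f.Injective) {i : ZMod n} :
    f i ∈ (G.cycleArc f s m).verts ↔ (i - s).val ≤ m :=
  ⟨fun ⟨_, hj, he⟩ => hf he ▸ hj, fun h => ⟨i, h, rfl⟩⟩

theorem cycleArc_adj {i : ZMod n} (hadj : G.Adj (f i) (f (i + 1))) (hi : (i - s).val < m) :
    (G.cycleArc f s m).Adj (f i) (f (i + 1)) :=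
  ⟨hadj, i, hi, rfl⟩

theorem natCast_mem_cycleArc_verts {j : ℕ} (hj : j ≤ m) :
    f (s + j) ∈ (G.cycleArc f s m).verts :=
  ⟨s + j, by rw [add_sub_cancel_left]; exact (ZMod.val_natCast_le j).trans hj, rfl⟩

theorem cycleArc_comp_add (c : ZMod n) :
    G.cycleArc (fun i => f (i + c)) s m = G.cycleArc f (s + c) m := by
  ext a b
  · constructor
    · rintro ⟨i, hi, rfl⟩
      exact ⟨i + c, by rwa [add_sub_add_right_eq_sub], rfl⟩
    · rintro ⟨i, hi, rfl⟩
      exact ⟨i - c, by rwa [sub_sub, add_comm c s], by simp only [sub_add_cancel]⟩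
  · constructor
    · rintro ⟨hab, i, hi, he⟩
      exact ⟨hab, i + c, by rwa [add_sub_add_right_eq_sub], by rw [add_right_comm]; exact he⟩
    · rintro ⟨hab, i, hi, he⟩
      refine ⟨hab, i - c, by rwa [sub_sub, add_comm c s], ?_⟩
      simpa only [sub_add_cancel, sub_add_eq_add_sub] using he

theorem eq_of_sym2_eq_of_three_le (hn : 3 ≤ n) (hf : f.Injective) {i j : ZMod n}
    (h : s(f i, f (i + 1)) = s(f j, f (j + 1))) : i = j := by
  rcases Sym2.eq_iff.mp h with ⟨h₁, -⟩ | ⟨h₁, h₂⟩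
  · exact hf h₁
  · refine absurd ?_ (ZMod.natCast_ne_zero_of_pos_of_lt two_pos hn)
    push_cast
    linear_combination hf h₂ - hf h₁

theorem exists_edge_of_cycleArc_inf_adj (hn : 3 ≤ n) (hf : f.Injective) {p q : ZMod n}
    {k l : ℕ} {a b : V} (h : (G.cycleArc f p k ⊓ G.cycleArc f q l).Adj a b) :
    ∃ i, (i - p).val < k ∧ (i - q).val < l ∧ s(f i, f (i + 1)) = s(a, b) := by
  obtain ⟨⟨-, i, hi, he⟩, ⟨-, j, hj, he'⟩⟩ := h
  obtain rfl := eq_of_sym2_eq_of_three_le hn hf (he.trans he'.symm)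
  exact ⟨i, hi, hj, he⟩

variable [NeZero n]

theorem cycleArc_le_cycleArc {p r : ZMod n} {k : ℕ} (hm : 1 ≤ m)
    (h : ∀ i, (i - r).val < m → (i - p).val < k) : G.cycleArc f r m ≤ G.cycleArc f p k := by
  constructor
  · rintro _ ⟨i, hi, rfl⟩
    refine ⟨i, ?_, rfl⟩
    rcases hi.lt_or_eq with hi | hi
    · exact (h i hi).le
    · have hn : n ≠ 1 := by have := ZMod.val_lt (i - r); omega
      have h₁ : (i - 1 - r).val = m - 1 := by
        rw [sub_right_comm, ZMod.val_sub (by rw [ZMod.val_one'' hn, hi]; exact hm),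
          ZMod.val_one'' hn, hi]
      have h₂ := ZMod.val_add_le (i - 1 - p) 1
      rw [show i - 1 - p + 1 = i - p by ring, ZMod.val_one'' hn] at h₂
      have := h (i - 1) (by omega)
      omega
  · rintro a b ⟨hab, i, hi, he⟩
    exact ⟨hab, i, h i hi, he⟩

theorem cycleArc_connected (hadj : ∀ i, G.Adj (f i) (f (i + 1))) :
    (G.cycleArc f s m).coe.Connected := by
  have hreach : ∀ j (hj : j ≤ m), (G.cycleArc f s m).coe.Reachable
      ⟨f (s + (0 : ℕ)), natCast_mem_cycleArc_verts (Nat.zero_le m)⟩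
      ⟨f (s + j), natCast_mem_cycleArc_verts hj⟩ := fun j hj =>
    Subgraph.reachable_of_adj_succ (fun t => f (s + t)) (Nat.zero_le j) (fun t _ ht => by
      simpa only [Nat.cast_succ, add_assoc] using
        cycleArc_adj (hadj (s + t))
          (by rw [add_sub_cancel_left]; exact (ZMod.val_natCast_le t).trans_lt (by omega)))
      _ _
  have hbase : ∀ y (hy : y ∈ (G.cycleArc f s m).verts), (G.cycleArc f s m).coe.Reachable
      ⟨f (s + (0 : ℕ)), natCast_mem_cycleArc_verts (Nat.zero_le m)⟩ ⟨y, hy⟩ := by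
    rintro _ ⟨i, hi, rfl⟩
    convert hreach _ hi using 2
    exact Subtype.ext (by simp only [ZMod.natCast_zmod_val, add_sub_cancel])
  refine (connected_iff _).mpr ⟨?_, ⟨_, natCast_mem_cycleArc_verts (Nat.zero_le m)⟩⟩
  rintro ⟨a, ha⟩ ⟨b, hb⟩
  exact (hbase a ha).symm.trans (hbase b hb)

theorem Subgraph.IsTracedBy.eq_cycleArc {S : G.Subgraph} {g : ℕ → V} {M : ℕ} (h : S.IsTracedBy g M)
    (hg : ∀ j ≤ M, g j = f (s + j)) : S = G.cycleArc f s M := by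
  have hval : ∀ i : ZMod n, f i = f (s + ((i - s).val : ℕ)) := fun i => by
    rw [ZMod.natCast_zmod_val, add_sub_cancel]
  have hsucc : ∀ i : ZMod n, f (i + 1) = f (s + ((i - s).val + 1 : ℕ)) := fun i => by
    rw [Nat.cast_succ, ZMod.natCast_zmod_val, ← add_assoc, add_sub_cancel]
  ext a b
  · rw [h.1, mem_cycleArc_verts_iff]
    constructor
    · rintro ⟨j, hj, rfl⟩
      exact ⟨s + j, by rw [add_sub_cancel_left]; exact (ZMod.val_natCast_le j).trans hj,
        (hg j hj).symm⟩
    · rintro ⟨i, hi, rfl⟩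
      exact ⟨_, hi, by rw [hg _ hi, ← hval]⟩
  · rw [cycleArc_adj_iff]
    constructor
    · intro hab
      obtain ⟨j, hj, he⟩ := (h.2 a b).mp hab
      refine ⟨hab.adj_sub, s + j, ?_, ?_⟩
      · rw [add_sub_cancel_left]; exact (ZMod.val_natCast_le j).trans_lt hj
      · rw [← he, hg j hj.le, hg (j + 1) hj, Nat.cast_succ, add_assoc]
    · rintro ⟨-, i, hi, he⟩
      exact (h.2 _ _).mpr ⟨_, hi, by rw [← he, hg _ hi.le, hg _ hi, ← hval, ← hsucc]⟩

theorem EnumeratesInducedCycle.exists_eq_add_or_eq_sub (hf : G.EnumeratesInducedCycle f)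
    {g : ℕ → V} {M : ℕ} (hg : ∀ j ≤ M, g j ∈ Set.range f)
    (hadj : ∀ j < M, G.Adj (g j) (g (j + 1)))
    (hinj : ∀ i j, i ≤ M → j ≤ M → g i = g j → i = j) :
    M < n ∧ ∃ t₀, (∀ j ≤ M, g j = f (t₀ + j)) ∨ ∀ j ≤ M, g j = f (t₀ - j) := by
  set t : ℕ → ZMod n := fun j => Function.invFun f (g j)
  have ht : ∀ j ≤ M, f (t j) = g j := fun j hj => Function.invFun_eq (hg j hj)
  have hstep : ∀ j < M, t (j + 1) = t j + 1 ∨ t j = t (j + 1) + 1 := fun j hj =>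
    (hf.2 _ _).mp (by rw [ht j hj.le, ht (j + 1) hj]; exact hadj j hj)
  have hback : ∀ j, j + 2 ≤ M → t (j + 2) ≠ t j := fun j hj h => by
    have := hinj _ _ hj (by omega) ((ht _ hj).symm.trans ((congrArg f h).trans (ht j (by omega))))
    omega
  have hdir := eq_add_or_eq_sub_of_step t hstep hback
  refine ⟨?_, t 0, hdir.imp (fun h j hj => by rw [← ht j hj, h j hj])
    (fun h j hj => by rw [← ht j hj, h j hj])⟩
  by_contra hle
  have : g n = g 0 := by
    rw [← ht n (by omega), ← ht 0 (by omega)]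
    rcases hdir with h | h <;> rw [h n (by omega)] <;> simp
  exact NeZero.ne n (hinj n 0 (by omega) (by omega) this)

theorem EnumeratesInducedCycle.exists_cycleArc_eq_deleteVerts [Finite V]
    (hf : G.EnumeratesInducedCycle f) {W : G.Subgraph} (hW : IsCycleSubgraph G W) {x : V}
    (hx : x ∈ W.verts) (hC : ∀ y ∈ W.verts, y ≠ x → y ∈ Set.range f) :
    ∃ s m, 1 ≤ m ∧ m < n ∧ W.deleteVerts {x} = G.cycleArc f s m ∧
      W.Adj x (f s) ∧ W.Adj x (f (s + m)) := by
  obtain ⟨c, hc, rfl⟩ := hW.exists_isCycle_toSubgraph_eq hx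
  have hL := hc.three_le_length
  set M := c.length - 2
  set g : ℕ → V := fun j => c.getVert (j + 1)
  have hT : (c.toSubgraph.deleteVerts {x}).IsTracedBy g M := hc.deleteVerts_isTracedBy rfl
  have hx₀ : c.toSubgraph.Adj x (g 0) := by
    simpa using c.toSubgraph_adj_getVert (i := 0) (by omega)
  have hx₁ : c.toSubgraph.Adj x (g M) := by
    have := c.toSubgraph_adj_getVert (i := M + 1) (by omega)
    rw [show M + 1 + 1 = c.length by omega, c.getVert_length] at this
    exact this.symm
  obtain ⟨hMn, t, h | h⟩ := hf.exists_eq_add_or_eq_sub (g := g)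
    (fun j hj => have ⟨hgW, hgx⟩ := (hT.1 _).mpr ⟨j, hj, rfl⟩; hC _ hgW hgx)
    (fun j hj => ((hT.2 _ _).mpr ⟨j, hj, rfl⟩).adj_sub)
    (fun i j hi hj h => by have := hc.getVert_injOn (by simp; omega) (by simp; omega) h; omega)
  · have h₀ := h 0 (Nat.zero_le _)
    rw [Nat.cast_zero, add_zero] at h₀
    exact ⟨t, M, by omega, hMn, hT.eq_cycleArc h, h₀ ▸ hx₀, h M le_rfl ▸ hx₁⟩
  · have h₀ := h 0 (Nat.zero_le _)
    rw [Nat.cast_zero, sub_zero] at h₀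
    refine ⟨t - M, M, by omega, hMn, hT.reverse.eq_cycleArc fun j hj => ?_, h M le_rfl ▸ hx₁,
      by rwa [sub_add_cancel, ← h₀]⟩
    rw [h _ (by omega), Nat.cast_sub hj]
    abel_nf

variable {p q : ZMod n} {k l : ℕ}

/- Below, the cycle is cut between the positions `n - 1` and `0` (`ZMod.val`), and
`P = G.cycleArc f p k`, `Q = G.cycleArc f q l`. The hypothesis `q.val + l < n` says that `Q` does
not cross the cut, `n ≤ p.val + k` that `P` does. The two components of `P ⊓ Q` are then its
vertices at positions `≥ p.val` and `< p.val`. -/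

theorem val_le_iff_of_cycleArc_inf_adj (hn : 3 ≤ n) (hf : f.Injective) (hk : k < n)
    (hQ : q.val + l < n) {i j : ZMod n}
    (h : (G.cycleArc f p k ⊓ G.cycleArc f q l).Adj (f i) (f j)) :
    p.val ≤ i.val ↔ p.val ≤ j.val := by
  obtain ⟨e, hep, heq, he⟩ := exists_edge_of_cycleArc_inf_adj hn hf h
  have := ZMod.val_add_eq_or e 1
  have := ZMod.val_one'' (n := n) (by omega)
  have := ZMod.val_sub_cases e p
  have := ZMod.val_sub_cases e q
  have := ZMod.val_lt (e + 1)
  have := ZMod.val_lt p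
  rcases Sym2.eq_iff.mp he with ⟨h₁, h₂⟩ | ⟨h₁, h₂⟩
  · rw [← hf h₁, ← hf h₂]; omega
  · rw [← hf h₁, ← hf h₂]; omega

theorem reachable_of_val_le_iff (hf : f.Injective) (hadj : ∀ i, G.Adj (f i) (f (i + 1)))
    (hQ : q.val + l < n) {i j : ZMod n}
    (hi : f i ∈ (G.cycleArc f p k ⊓ G.cycleArc f q l).verts)
    (hj : f j ∈ (G.cycleArc f p k ⊓ G.cycleArc f q l).verts)
    (hij : p.val ≤ i.val ↔ p.val ≤ j.val) :
    (G.cycleArc f p k ⊓ G.cycleArc f q l).coe.Reachable ⟨f i, hi⟩ ⟨f j, hj⟩ := by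
  wlog hle : i.val ≤ j.val generalizing i j
  · exact (this hj hi hij.symm (by omega)).symm
  have hiP := (mem_cycleArc_verts hf).mp hi.1
  have hiQ := (mem_cycleArc_verts hf).mp hi.2
  have hjP := (mem_cycleArc_verts hf).mp hj.1
  have hjQ := (mem_cycleArc_verts hf).mp hj.2
  have := ZMod.val_sub_cases i p; have := ZMod.val_sub_cases j p
  have := ZMod.val_sub_cases i q; have := ZMod.val_sub_cases j q
  have := ZMod.val_lt i; have := ZMod.val_lt j; have := ZMod.val_lt p; have := ZMod.val_lt q
  have hstep : ∀ t, i.val ≤ t → t < j.val →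
      (G.cycleArc f p k ⊓ G.cycleArc f q l).Adj (f (t : ℕ)) (f ((t + 1 : ℕ) : ZMod n)) := by
    intro t h₁ h₂
    have := ZMod.val_cast_of_lt (n := n) (a := t) (by omega)
    have := ZMod.val_sub_cases (t : ZMod n) p
    have := ZMod.val_sub_cases (t : ZMod n) q
    rw [Nat.cast_succ]
    exact ⟨cycleArc_adj (hadj _) (by omega), cycleArc_adj (hadj _) (by omega)⟩
  have := Subgraph.reachable_of_adj_succ (fun t : ℕ => f t) hle hstep
    (by simpa only [ZMod.natCast_zmod_val] using hi)
    (by simpa only [ZMod.natCast_zmod_val] using hj)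
  simpa only [ZMod.natCast_zmod_val] using this

theorem exists_mem_on_each_side_of_cut (hn : 3 ≤ n) (hf : f.Injective)
    (hadj : ∀ i, G.Adj (f i) (f (i + 1))) (hk : k < n) (hQ : q.val + l < n)
    (hcomp : Nat.card (G.cycleArc f p k ⊓ G.cycleArc f q l).coe.ConnectedComponent = 2)
    {N : Set V} (hN : ∀ D : (G.cycleArc f p k ⊓ G.cycleArc f q l).coe.ConnectedComponent,
      ∃ d ∈ D.supp, (d : V) ∈ N) :
    (∃ t, p.val ≤ t.val ∧ f t ∈ N) ∧ ∃ t, t.val < p.val ∧ f t ∈ N := by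
  set X := G.cycleArc f p k ⊓ G.cycleArc f q l
  have hXf : ∀ y ∈ X.verts, ∃ i, f i = y := fun y hy => by
    obtain ⟨i, -, hi⟩ := hy.1; exact ⟨i, hi⟩
  set S : Set X.verts := {y | ∃ i, f i = y ∧ p.val ≤ i.val}
  have hmemS : ∀ i (hi : f i ∈ X.verts), (⟨f i, hi⟩ : X.verts) ∈ S ↔ p.val ≤ i.val :=
    fun i hi => ⟨fun ⟨j, hj, hpj⟩ => hf hj ▸ hpj, fun h => ⟨i, rfl, h⟩⟩
  have hclosed : ∀ a b : X.verts, X.coe.Adj a b → (a ∈ S ↔ b ∈ S) := by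
    rintro ⟨_, ha⟩ ⟨_, hb⟩ hab
    obtain ⟨i, rfl⟩ := hXf _ ha
    obtain ⟨j, rfl⟩ := hXf _ hb
    rw [hmemS, hmemS]
    exact val_le_iff_of_cycleArc_inf_adj hn hf hk hQ hab
  have hreach : ∀ a b : X.verts, (a ∈ S ↔ b ∈ S) → X.coe.Reachable a b := by
    rintro ⟨_, ha⟩ ⟨_, hb⟩ hab
    obtain ⟨i, rfl⟩ := hXf _ ha
    obtain ⟨j, rfl⟩ := hXf _ hb
    rw [hmemS, hmemS] at hab
    exact reachable_of_val_le_iff hf hadj hQ ha hb hab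
  obtain ⟨⟨_, h₁⟩, h₁S, h₁N⟩ := exists_mem_of_card_connectedComponent_eq_two hcomp
    (fun a b hab => (hclosed a b hab).mp) (fun a ha b hb => hreach a b (iff_of_false ha hb)) hN
  obtain ⟨⟨_, h₂⟩, h₂S, h₂N⟩ := exists_mem_of_card_connectedComponent_eq_two hcomp (S := Sᶜ)
    (fun a b hab => mt (hclosed a b hab).mpr)
    (fun a ha b hb => hreach a b (iff_of_true (not_not.mp ha) (not_not.mp hb))) hN
  obtain ⟨t₁, rfl⟩ := hXf _ h₁
  obtain ⟨t₂, rfl⟩ := hXf _ h₂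
  rw [hmemS] at h₁S
  rw [Set.mem_compl_iff, hmemS, not_le] at h₂S
  exact ⟨⟨t₁, h₁S, h₁N⟩, ⟨t₂, h₂S, h₂N⟩⟩

theorem cycleArc_le_or_cycleArc_le_of_cut (hf : f.Injective) {r : ZMod n} {m : ℕ}
    (hm : 1 ≤ m) (hmn : m < n) (hP : n ≤ p.val + k) (hQ : q.val + l < n)
    (hr : f r ∈ (G.cycleArc f p k ⊓ G.cycleArc f q l).verts)
    (hrm : f (r + m) ∈ (G.cycleArc f p k ⊓ G.cycleArc f q l).verts)
    {t₁ t₂ : ZMod n} (ht₁ : p.val ≤ t₁.val) (ht₂ : t₂.val < p.val)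
    (hNR : ∀ t ∈ ({t₁, t₂} : Set (ZMod n)), (t - r).val ≤ m → t = r ∨ t = r + m) :
    G.cycleArc f r m ≤ G.cycleArc f p k ∨ G.cycleArc f r m ≤ G.cycleArc f q l := by
  set r' := r + (m : ZMod n)
  have hrP := (mem_cycleArc_verts hf).mp hr.1
  have hrQ := (mem_cycleArc_verts hf).mp hr.2
  have hrmP := (mem_cycleArc_verts hf).mp hrm.1
  have hrmQ := (mem_cycleArc_verts hf).mp hrm.2
  have hp := ZMod.val_lt p
  have hq := ZMod.val_lt q
  have hx := ZMod.val_lt r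
  have hy := ZMod.val_lt r'
  have hrq : (r - q).val = r.val - q.val ∧ q.val ≤ r.val := by
    have := ZMod.val_sub_cases r q; omega
  have hrmq : (r' - q).val = r'.val - q.val ∧ q.val ≤ r'.val := by
    have := ZMod.val_sub_cases r' q; omega
  have hxy : r'.val = r.val + m ∨ r'.val + n = r.val + m := by
    have := ZMod.val_add_eq_or r (m : ZMod n); rwa [ZMod.val_cast_of_lt hmn] at this
  by_cases hcross : r.val + m < n
  · refine Or.inr (cycleArc_le_cycleArc hm fun i hi => ?_)
    have := ZMod.val_sub_cases i r; have := ZMod.val_sub_cases i q; have := ZMod.val_lt i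
    omega
  have hyx : r'.val + n = r.val + m := by omega
  clear hxy hrq hrmq
  -- `R` crosses the cut: an end of `R` on the wrong side would put `t₁` or `t₂` inside `R`
  have hpx : p.val ≤ r.val := by
    by_contra hpx
    have := ZMod.val_sub_cases t₁ r; have := ZMod.val_lt t₁
    rcases hNR t₁ (by simp) (by omega) with rfl | rfl <;> omega
  have hyp : r'.val < p.val := by
    by_contra hyp
    have := ZMod.val_sub_cases t₂ r
    rcases hNR t₂ (by simp) (by omega) with rfl | rfl <;> omega
  have hrmp : (r' - p).val = r'.val + n - p.val := by
    have := ZMod.val_sub_cases r' p; omega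
  refine Or.inl (cycleArc_le_cycleArc hm fun i hi => ?_)
  have := ZMod.val_sub_cases i r; have := ZMod.val_sub_cases i p; have := ZMod.val_lt i
  omega

theorem exists_edge_of_card_connectedComponent_inf_eq_two (hadj : ∀ i, G.Adj (f i) (f (i + 1)))
    (hk : 1 ≤ k)
    (hcomp : Nat.card (G.cycleArc f p k ⊓ G.cycleArc f q l).coe.ConnectedComponent = 2) :
    ∃ e, (e - p).val < k ∧ l ≤ (e - q).val := by
  by_contra! h
  rw [inf_eq_left.mpr (cycleArc_le_cycleArc hk h)] at hcomp
  exact (cycleArc_connected hadj).preconnected.card_connectedComponent_ne_two hcomp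

theorem cycleArc_le_or_cycleArc_le (hn : 3 ≤ n) (hf : f.Injective)
    (hadj : ∀ i, G.Adj (f i) (f (i + 1))) {r : ZMod n} {m : ℕ} (hk₁ : 1 ≤ k) (hk : k < n)
    (hm : 1 ≤ m) (hmn : m < n)
    (hcomp : Nat.card (G.cycleArc f p k ⊓ G.cycleArc f q l).coe.ConnectedComponent = 2)
    {N : Set V} (hN : ∀ D : (G.cycleArc f p k ⊓ G.cycleArc f q l).coe.ConnectedComponent,
      ∃ d ∈ D.supp, (d : V) ∈ N)
    (hNsub : N ⊆ (G.cycleArc f p k ⊓ G.cycleArc f q l).verts) (hr : f r ∈ N)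
    (hrm : f (r + m) ∈ N) (hNR : ∀ y ∈ N, y ∈ (G.cycleArc f r m).verts → y = f r ∨ y = f (r + m)) :
    G.cycleArc f r m ≤ G.cycleArc f p k ∨ G.cycleArc f r m ≤ G.cycleArc f q l := by
  obtain ⟨e, hep, heq⟩ := exists_edge_of_card_connectedComponent_inf_eq_two hadj hk₁ hcomp
  -- reindex so that the edge `e` of `P` outside `Q` becomes the edge from `-1` to `0`
  set c := e + 1
  set f' : ZMod n → V := fun i => f (i + c)
  have hshift : ∀ s j, G.cycleArc f s j = G.cycleArc f' (s - c) j := fun s j => by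
    rw [cycleArc_comp_add, sub_add_cancel]
  have hf' : f'.Injective := fun a b h => add_right_cancel (hf h)
  have hadj' : ∀ i, G.Adj (f' i) (f' (i + 1)) := fun i => by
    simpa only [f', add_right_comm] using hadj (i + c)
  have hf'r : f' (r - c) = f r := by simp only [f', sub_add_cancel]
  have hf'rm : f' (r - c + m) = f (r + m) := by simp only [f']; congr 1; abel
  have hcut : ∀ s, (-1 - (s - c)).val = (e - s).val := fun s => by
    congr 1; simp only [c]; abel
  have hP : n ≤ (p - c).val + k := by
    have := hcut p; have := ZMod.val_neg_one_sub (p - c); have := ZMod.val_lt (p - c); omega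
  have hQ : (q - c).val + l < n := by
    have := hcut q; have := ZMod.val_neg_one_sub (q - c); have := ZMod.val_lt (q - c); omega
  rw [hshift p, hshift q] at hcomp hN hNsub
  rw [hshift r] at hNR
  rw [← hf'r] at hr
  rw [← hf'rm] at hrm
  rw [← hf'r, ← hf'rm] at hNR
  obtain ⟨⟨t₁, ht₁, ht₁N⟩, ⟨t₂, ht₂, ht₂N⟩⟩ :=
    exists_mem_on_each_side_of_cut hn hf' hadj' hk hQ hcomp hN
  have := cycleArc_le_or_cycleArc_le_of_cut hf' hm hmn hP hQ
    (hNsub hr) (hNsub hrm) ht₁ ht₂ (by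
      rintro t (rfl | rfl) ht
      · exact (hNR _ ht₁N ((mem_cycleArc_verts hf').mpr ht)).imp (@hf' _ _) (@hf' _ _)
      · exact (hNR _ ht₂N ((mem_cycleArc_verts hf').mpr ht)).imp (@hf' _ _) (@hf' _ _))
  rwa [hshift p, hshift q, hshift r]

end SimpleGraph

section Wedges

open SimpleGraph

variable {G : SimpleGraph V} {C I : Set V} {W W' : G.Subgraph} {x x' y : V}

theorem IsCycleSubgraph.adj_iff_ncard_neighborSet_deleteVerts (hW : IsCycleSubgraph G W)
    (hy : y ∈ (W.deleteVerts {x}).verts) :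
    W.Adj x y ↔ ((W.deleteVerts {x}).neighborSet y).ncard = 1 := by
  obtain ⟨hyW, hyx⟩ := hy
  have hset : (W.deleteVerts {x}).neighborSet y = W.neighborSet y \ {x} := by
    ext z
    simp only [Subgraph.mem_neighborSet, Subgraph.deleteVerts_adj, Set.mem_sdiff]
    exact ⟨fun ⟨_, _, _, hz, h⟩ => ⟨h, hz⟩, fun ⟨h, hz⟩ => ⟨hyW, hyx, W.edge_vert h.symm, hz, h⟩⟩
  rw [hset]
  by_cases hxy : W.Adj x y
  · rw [Set.ncard_sdiff_singleton_of_mem (show x ∈ W.neighborSet y from hxy.symm), hW.2 y hyW]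
    exact iff_of_true hxy rfl
  · rw [Set.sdiff_singleton_eq_self fun h => hxy h.symm, hW.2 y hyW]
    exact iff_of_false hxy (by omega)

theorem IsCycleSubgraph.adj_iff_adj_of_deleteVerts_eq (hW : IsCycleSubgraph G W)
    (hW' : IsCycleSubgraph G W') (h : W.deleteVerts {x} = W'.deleteVerts {x'})
    (hy : y ∈ (W.deleteVerts {x}).verts) : W.Adj x y ↔ W'.Adj x' y := by
  rw [hW.adj_iff_ncard_neighborSet_deleteVerts hy,
    hW'.adj_iff_ncard_neighborSet_deleteVerts (h ▸ hy), h]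

theorem IsCycleSubgraph.eq_or_eq_of_adj (hW : IsCycleSubgraph G W) (hx : x ∈ W.verts) {a b : V}
    (ha : W.Adj x a) (hb : W.Adj x b) (hab : a ≠ b) (hy : W.Adj x y) : y = a ∨ y = b := by
  have h : ({a, b} : Set V) = W.neighborSet x :=
    Set.eq_of_subset_of_ncard_le (by rintro z (rfl | rfl) <;> assumption)
      (by rw [hW.2 x hx, Set.ncard_pair hab])
      (Set.finite_of_ncard_ne_zero (by rw [hW.2 x hx]; omega))
  exact (h.symm ▸ hy : y ∈ ({a, b} : Set V))

theorem IsWedge.mem_verts (hW : IsWedge G C I W x) : x ∈ W.verts :=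
  (hW.2.2.1.symm ▸ rfl : x ∈ W.verts ∩ I).1

theorem IsWedge.mem_of_mem_of_ne (hIC : I = Cᶜ) (hW : IsWedge G C I W x) (hy : y ∈ W.verts)
    (hyx : y ≠ x) : y ∈ C := by
  by_contra hyC
  have : y ∈ W.verts ∩ I := ⟨hy, hIC ▸ hyC⟩
  rw [hW.2.2.1] at this
  exact hyx this

theorem IsWedge.adj_iff (hW : IsWedge G C I W x) (hy : y ∈ W.verts) :
    W.Adj x y ↔ G.Adj x y := by
  have h : W.neighborSet x = W.verts ∩ G.neighborSet x :=
    Set.eq_of_subset_of_ncard_le (fun z hz => ⟨W.edge_vert hz.symm, hz.adj_sub⟩)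
      (by rw [hW.2.2.2, hW.1.2 x hW.mem_verts])
      (Set.finite_of_ncard_ne_zero (by rw [hW.2.2.2]; omega))
  exact ⟨Subgraph.Adj.adj_sub, fun hxy => (h.symm ▸ ⟨hy, hxy⟩ : y ∈ W.neighborSet x)⟩

theorem IsWedge.notMem_verts (hW : IsWedge G C I W y) (hx : x ∈ I) (hxy : x ≠ y) :
    x ∉ W.verts := fun h =>
  hxy (hW.2.2.1 ▸ ⟨h, hx⟩ : x ∈ ({y} : Set V))

theorem IsWedge.eq_or_eq_of_adj (hW : IsWedge G C I W x) {a b : V} (ha : W.Adj x a)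
    (hb : W.Adj x b) (hab : a ≠ b) (hy : y ∈ W.verts) (hxy : G.Adj x y) : y = a ∨ y = b :=
  hW.1.eq_or_eq_of_adj hW.mem_verts ha hb hab ((hW.adj_iff hy).mpr hxy)

theorem IsWedge.exists_cycleArc_eq_deleteVerts [Finite V] {n : ℕ} [NeZero n] {f : ZMod n → V}
    (hW : IsWedge G C I W x) (hIC : I = Cᶜ) (hf : G.EnumeratesInducedCycle f)
    (hfC : Set.range f = C) :
    ∃ s m, 1 ≤ m ∧ m < n ∧ W.deleteVerts {x} = G.cycleArc f s m ∧
      W.Adj x (f s) ∧ W.Adj x (f (s + m)) :=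
  hf.exists_cycleArc_eq_deleteVerts hW.1 hW.mem_verts fun _ hy hyx =>
    hfC ▸ hW.mem_of_mem_of_ne hIC hy hyx

theorem IsCobweb.neighborSet_subset_deleteVerts (hcob : IsCobweb G C I) {u w : V} (hw : w ∈ I)
    (hW : IsWedge G C I W u) (ha : Attaches G w W) :
    G.neighborSet w ⊆ (W.deleteVerts {u}).verts := fun _ hy =>
  ⟨ha.2 hy, fun h => hcob.2.2.2.1 w hw u hW.2.1 (Set.mem_singleton_iff.mp h ▸ hy)⟩

theorem IsCobweb.improves_of_deleteVerts_le (hcob : IsCobweb G C I) {u w : V}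
    (hW : IsWedge G C I W w) (hW' : IsWedge G C I W' u) (ha : Attaches G w W')
    (hle : W.deleteVerts {w} ≤ W'.deleteVerts {u}) : Improves G W w W' u := by
  have hsub := hcob.neighborSet_subset_deleteVerts hW.2.1 hW' ha
  have hwu : w ≠ u := fun h => ha.1 (h ▸ hW'.mem_verts)
  refine ⟨hle, fun h => hcob.2.2.2.2.2 w hW.2.1 u hW'.2.1 hwu fun y hy => ?_⟩
  have hyW : y ∈ (W.deleteVerts {w}).verts := h ▸ hsub hy
  exact ((hW.1.adj_iff_adj_of_deleteVerts_eq hW'.1 h hyW).mp ((hW.adj_iff hyW.1).mpr hy)).adj_sub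

end Wedges

/-- if `w` attaches to both wedges of a good pair and has a
neighbour in each of the two components of their intersection, then `σ w`
improves at least one of them. -/
theorem attach_both_improves [Finite V] (G : SimpleGraph V) (C I : Set V)
    (hcob : IsCobweb G C I) (σ : V → G.Subgraph)
    (hσ : ∀ v ∈ I, IsWedge G C I (σ v) v)
    (u v : V) (hu : GoodVertex G I σ u) (hv : GoodVertex G I σ v)
    (hcomp : Nat.card ((σ u ⊓ σ v).coe.ConnectedComponent) = 2)
    (w : V) (hw : w ∈ I)
    (hau : Attaches G w (σ u)) (hav : Attaches G w (σ v))
    (hnb : ∀ D : (σ u ⊓ σ v).coe.ConnectedComponent,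
      ∃ d ∈ Subtype.val '' D.supp, G.Adj w d) :
    Improves G (σ w) w (σ u) u ∨ Improves G (σ w) w (σ v) v := by
  obtain ⟨n, hn, f, hf, hfC⟩ := hcob.1.exists_enumeratesInducedCycle
  have : NeZero n := ⟨by omega⟩
  have hσu := hσ u hu.1
  have hσv := hσ v hv.1
  have hσw := hσ w hw
  obtain ⟨p, k, hk₁, hk, hP, -⟩ := hσu.exists_cycleArc_eq_deleteVerts hcob.2.1 hf hfC
  obtain ⟨q, l, -, -, hQ, -⟩ := hσv.exists_cycleArc_eq_deleteVerts hcob.2.1 hf hfC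
  obtain ⟨r, m, hm₁, hm, hR, hwr, hwrm⟩ := hσw.exists_cycleArc_eq_deleteVerts hcob.2.1 hf hfC
  have huv : u ≠ v := by
    rintro rfl
    rw [inf_idem] at hcomp
    exact hσu.1.1.preconnected.card_connectedComponent_ne_two hcomp
  rw [Subgraph.inf_eq_deleteVerts_inf_deleteVerts (hσv.notMem_verts hu.1 huv)
    (hσu.notMem_verts hv.1 huv.symm), hP, hQ] at hcomp hnb
  have hle := cycleArc_le_or_cycleArc_le hn hf.1 hf.adj_succ hk₁ hk hm₁ hm hcomp
    (N := G.neighborSet w) (fun D => by obtain ⟨_, ⟨d, hd, rfl⟩, hwd⟩ := hnb D; exact ⟨d, hd, hwd⟩)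
    (fun y hy => by
      rw [← hP, ← hQ]
      exact ⟨hcob.neighborSet_subset_deleteVerts hw hσu hau hy,
        hcob.neighborSet_subset_deleteVerts hw hσv hav hy⟩)
    hwr.adj_sub hwrm.adj_sub fun y hy hyR =>
      hσw.eq_or_eq_of_adj hwr hwrm
        (hf.1.ne (left_ne_add.mpr (ZMod.natCast_ne_zero_of_pos_of_lt hm₁ hm)))
        (hR.symm ▸ hyR : y ∈ ((σ w).deleteVerts {w}).verts).1 hy
  rw [← hP, ← hQ, ← hR] at hle
  exact hle.imp (hcob.improves_of_deleteVerts_le hσw hσu hau)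
    (hcob.improves_of_deleteVerts_le hσw hσv hav)
end
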